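/- arXiv:2105.15173 — 5 statements merged into one kernel-verified Lean document; each statement's English description precedes it below -/
import Mathlib

section
/- Let A be a ν×ν complex matrix, B a μ×μ complex matrix, and H a ν×μ complex matrix. Let c₁, c₂, c ∈ ℂ and r₁, r₂, r > 0 be such that the spectrum of A is contained in the open disc of center c₁ and radius r₁, the spectrum of B is contained in the open disc of center c₂ and radius r₂, both closed discs ball(c₁,r₁) and ball(c₂,r₂) are contained in the open disc of center c and radius r, and f : ℂ → ℂ is analytic on an open set containing the closed disc of center c and radius r. Then (1/(2πi))² ∮_{|μ−c₂|=r₂} ∮_{|λ−c₁|=r₁} f^{[1]}(λ,μ) (λI − A)⁻¹ H (μI − B)⁻¹ dλ dμ = (1/(2πi)) ∮_{|λ−c|=r} f(λ) (λI − A)⁻¹ H (λI − B)⁻¹ dλ, where all contour integrals are taken counterclockwise over circles. -/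
open Matrix Complex Real Metric Filter
open MeasureTheory intervalIntegral
attribute [local instance] Matrix.normedAddCommGroup Matrix.normedSpace

-- determinant of an entrywise-differentiable family is differentiable
lemma diffAt_det {n : ℕ} {X : ℂ → Matrix (Fin n) (Fin n) ℂ} {w : ℂ}
    (h : ∀ i j, DifferentiableAt ℂ (fun w => X w i j) w) :
    DifferentiableAt ℂ (fun w => (X w).det) w := by
  simp only [Matrix.det_apply']
  exact DifferentiableAt.fun_sum fun σ _ =>
    (DifferentiableAt.fun_finsetProd (fun i _ => h (σ i) i)).const_mul _

lemma diffAt_entries {n : ℕ} (M : Matrix (Fin n) (Fin n) ℂ) (w : ℂ) (i j : Fin n) :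
    DifferentiableAt ℂ (fun w => (w • (1 : Matrix (Fin n) (Fin n) ℂ) - M) i j) w := by
  simp only [Matrix.sub_apply, Matrix.smul_apply, smul_eq_mul]
  exact (differentiableAt_id.mul_const _).sub_const _

lemma diffAt_adj {n : ℕ} (M : Matrix (Fin n) (Fin n) ℂ) (w : ℂ) (i j : Fin n) :
    DifferentiableAt ℂ (fun w => (w • (1 : Matrix (Fin n) (Fin n) ℂ) - M).adjugate i j) w := by
  simp only [Matrix.adjugate_apply]
  refine diffAt_det fun k l => ?_
  rcases eq_or_ne k j with rfl | hk
  · simp only [Matrix.updateRow_self]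
    exact differentiableAt_const _
  · simp only [Matrix.updateRow_ne hk]
    exact diffAt_entries M w k l

lemma resolvent_eq_sum {n : ℕ} (M : Matrix (Fin n) (Fin n) ℂ) (w : ℂ) :
    (w • (1 : Matrix (Fin n) (Fin n) ℂ) - M)⁻¹ =
      ∑ i, ∑ j, (((w • (1 : Matrix (Fin n) (Fin n) ℂ) - M).det)⁻¹ *
        (w • (1 : Matrix (Fin n) (Fin n) ℂ) - M).adjugate i j) • Matrix.single i j 1 := by
  conv_lhs => rw [Matrix.matrix_eq_sum_single
    ((w • (1 : Matrix (Fin n) (Fin n) ℂ) - M)⁻¹)]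
  refine Finset.sum_congr rfl fun i _ => Finset.sum_congr rfl fun j _ => ?_
  rw [Matrix.inv_def, Matrix.smul_apply, Ring.inverse_eq_inv', smul_eq_mul,
    Matrix.smul_single, smul_eq_mul, mul_one]

lemma isUnit_of_not_spectrum {n : ℕ} {M : Matrix (Fin n) (Fin n) ℂ} {w : ℂ}
    (h : w ∉ spectrum ℂ M) : IsUnit (w • (1 : Matrix (Fin n) (Fin n) ℂ) - M) := by
  rw [← Algebra.algebraMap_eq_smul_one]
  exact spectrum.notMem_iff.mp h

lemma det_ne_zero_of_not_spectrum {n : ℕ} {M : Matrix (Fin n) (Fin n) ℂ} {w : ℂ}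
    (h : w ∉ spectrum ℂ M) : (w • (1 : Matrix (Fin n) (Fin n) ℂ) - M).det ≠ 0 :=
  isUnit_iff_ne_zero.mp ((Matrix.isUnit_iff_isUnit_det _).mp (isUnit_of_not_spectrum h))

lemma diffAt_resolvent {n : ℕ} {M : Matrix (Fin n) (Fin n) ℂ} {w : ℂ}
    (h : w ∉ spectrum ℂ M) :
    DifferentiableAt ℂ (fun w => (w • (1 : Matrix (Fin n) (Fin n) ℂ) - M)⁻¹) w := by
  have : (fun w => (w • (1 : Matrix (Fin n) (Fin n) ℂ) - M)⁻¹) =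
      fun w => ∑ i, ∑ j, (((w • (1 : Matrix (Fin n) (Fin n) ℂ) - M).det)⁻¹ *
        (w • (1 : Matrix (Fin n) (Fin n) ℂ) - M).adjugate i j) • Matrix.single i j 1 :=
    funext fun w => resolvent_eq_sum M w
  rw [this]
  refine DifferentiableAt.fun_sum fun i _ => DifferentiableAt.fun_sum fun j _ => ?_
  refine DifferentiableAt.smul_const ?_ _
  exact ((diffAt_det (diffAt_entries M w)).inv (det_ne_zero_of_not_spectrum h)).mul
    (diffAt_adj M w i j)

lemma myContinuousAt_matrix_inv {n : ℕ} (N : Matrix (Fin n) (Fin n) ℂ) (h : N.det ≠ 0) :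
    ContinuousAt (fun X : Matrix (Fin n) (Fin n) ℂ => X⁻¹) N := by
  refine continuousAt_matrix_inv N ?_
  rw [Ring.inverse_eq_inv']
  exact ContinuousAt.inv₀ continuousAt_id h

lemma tendsto_resolvent_cobounded {n : ℕ} (M : Matrix (Fin n) (Fin n) ℂ) :
    Tendsto (fun w : ℂ => (w • (1 : Matrix (Fin n) (Fin n) ℂ) - M)⁻¹)
      (Bornology.cobounded ℂ) (nhds 0) := by
  have h1 : Tendsto (fun w : ℂ => (1 : Matrix (Fin n) (Fin n) ℂ) - w⁻¹ • M)
      (Bornology.cobounded ℂ) (nhds (1 : Matrix (Fin n) (Fin n) ℂ)) := by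
    have := (tendsto_inv₀_cobounded (α := ℂ)).smul_const M
    simpa using (tendsto_const_nhds (x := (1 : Matrix (Fin n) (Fin n) ℂ))).sub this
  have h2 : Tendsto (fun w : ℂ => ((1 : Matrix (Fin n) (Fin n) ℂ) - w⁻¹ • M)⁻¹)
      (Bornology.cobounded ℂ) (nhds (1 : Matrix (Fin n) (Fin n) ℂ)) := by
    have := (myContinuousAt_matrix_inv 1 (by simp)).tendsto.comp h1
    simpa [Function.comp_def] using this
  have h3 : Tendsto (fun w : ℂ => w⁻¹ • ((1 : Matrix (Fin n) (Fin n) ℂ) - w⁻¹ • M)⁻¹)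
      (Bornology.cobounded ℂ) (nhds 0) := by
    simpa using (tendsto_inv₀_cobounded (α := ℂ)).smul h2
  refine h3.congr' ?_
  have hdet : Tendsto (fun w : ℂ => ((1 : Matrix (Fin n) (Fin n) ℂ) - w⁻¹ • M).det)
      (Bornology.cobounded ℂ) (nhds (1 : ℂ)) := by
    have := ((continuous_id.matrix_det).continuousAt (x := (1 : Matrix (Fin n) (Fin n) ℂ))).tendsto.comp h1
    simpa [Function.comp_def] using this
  filter_upwards [hdet.eventually_ne one_ne_zero, eventually_cobounded_le_norm (1 : ℝ)]
    with w hw hnorm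
  have hw0 : w ≠ 0 := by
    intro h; rw [h] at hnorm; simp at hnorm; linarith
  set C := (1 : Matrix (Fin n) (Fin n) ℂ) - w⁻¹ • M with hC
  have key : (w • (1 : Matrix (Fin n) (Fin n) ℂ) - M) * (w⁻¹ • C⁻¹) = 1 := by
    have h4 : w • (1 : Matrix (Fin n) (Fin n) ℂ) - M = w • C := by
      rw [hC, smul_sub, smul_smul, mul_inv_cancel₀ hw0, one_smul]
    rw [h4, Matrix.smul_mul, Matrix.mul_smul, smul_smul, mul_inv_cancel₀ hw0, one_smul,
      Matrix.mul_nonsing_inv _ (isUnit_iff_ne_zero.mpr hw)]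
  exact (Matrix.inv_eq_right_inv key).symm

section helpers
variable {E F : Type*} [NormedAddCommGroup E] [NormedSpace ℂ E] [CompleteSpace E]
  [NormedAddCommGroup F] [NormedSpace ℂ F] [CompleteSpace F]

lemma circleIntegral_CLM (L : E →L[ℂ] F) {f : ℂ → E} {c : ℂ} {R : ℝ}
    (hf : CircleIntegrable f c R) :
    (∮ z in C(c, R), L (f z)) = L (∮ z in C(c, R), f z) := by
  simp only [circleIntegral]
  rw [← L.intervalIntegral_comp_comm hf.out]
  congr 1
  funext θ
  rw [L.map_smul]

lemma circleIntegral_add {f g : ℂ → E} {c : ℂ} {R : ℝ} (hf : CircleIntegrable f c R)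
    (hg : CircleIntegrable g c R) :
    (∮ z in C(c, R), (f z + g z)) = (∮ z in C(c, R), f z) + ∮ z in C(c, R), g z := by
  simp only [circleIntegral, smul_add]
  exact intervalIntegral.integral_add hf.out hg.out

end helpers

lemma continuousOn_resolvent {n : ℕ} {M : Matrix (Fin n) (Fin n) ℂ} {s : Set ℂ}
    (h : ∀ w ∈ s, w ∉ spectrum ℂ M) :
    ContinuousOn (fun w => (w • (1 : Matrix (Fin n) (Fin n) ℂ) - M)⁻¹) s :=
  fun w hw => ((diffAt_resolvent (h w hw)).continuousAt).continuousWithinAt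

lemma circleIntegral_resolvent {n : ℕ} (M : Matrix (Fin n) (Fin n) ℂ) (c₀ : ℂ) (r₀ : ℝ)
    (h0 : 0 < r₀) (hspec : spectrum ℂ M ⊆ ball c₀ r₀) :
    (∮ w in C(c₀, r₀), (w • (1 : Matrix (Fin n) (Fin n) ℂ) - M)⁻¹) =
      (2 * π * I : ℂ) • (1 : Matrix (Fin n) (Fin n) ℂ) := by
  set res : ℂ → Matrix (Fin n) (Fin n) ℂ := fun w => (w • 1 - M)⁻¹ with hres
  set K : Matrix (Fin n) (Fin n) ℂ := M - c₀ • 1 with hK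
  have hnotspec : ∀ w : ℂ, r₀ ≤ dist w c₀ → w ∉ spectrum ℂ M := fun w hw hmem => by
    have := hspec hmem; rw [mem_ball] at this; linarith
  -- the integral does not depend on the radius
  have hconst : ∀ R, r₀ ≤ R → (∮ w in C(c₀, R), res w) = ∮ w in C(c₀, r₀), res w := by
    intro R hR
    refine circleIntegral_eq_of_differentiable_on_annulus_off_countable h0 hR
      Set.countable_empty ?_ ?_
    · refine continuousOn_resolvent fun w hw => hnotspec w ?_
      have := hw.2
      simpa [mem_ball, not_lt] using this
    · intro z hz
      have h' : r₀ < dist z c₀ := by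
        have := hz.1.2
        simpa [mem_closedBall, not_le] using this
      exact diffAt_resolvent (hnotspec z h'.le)
  -- decomposition of the resolvent on a large circle
  have hdecomp : ∀ w : ℂ, w ≠ c₀ → w ∉ spectrum ℂ M →
      res w = (w - c₀)⁻¹ • (1 : Matrix (Fin n) (Fin n) ℂ) + (w - c₀)⁻¹ • (res w * K) := by
    intro w hw hsp
    have hu := isUnit_of_not_spectrum hsp
    have hinv : res w * (w • 1 - M) = 1 :=
      Matrix.nonsing_inv_mul _ ((Matrix.isUnit_iff_isUnit_det _).mp hu)
    have : (1 : Matrix (Fin n) (Fin n) ℂ) + res w * K = (w - c₀) • res w := by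
      calc (1 : Matrix (Fin n) (Fin n) ℂ) + res w * K
          = res w * ((w • 1 - M) + K) := by rw [Matrix.mul_add, hinv]
        _ = res w * ((w - c₀) • 1) := by rw [hK]; congr 1; rw [sub_smul]; abel
        _ = (w - c₀) • res w := by rw [Matrix.mul_smul, Matrix.mul_one]
    have h2 : (w - c₀)⁻¹ • ((1 : Matrix (Fin n) (Fin n) ℂ) + res w * K) = res w := by
      rw [this, smul_smul, inv_mul_cancel₀ (sub_ne_zero.mpr hw), one_smul]
    conv_lhs => rw [← h2]
    rw [smul_add]
  -- ‖∮ res - 2πi•1‖ ≤ 2π ε for every ε > 0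
  have key : ∀ ε : ℝ, 0 < ε →
      ‖(∮ w in C(c₀, r₀), res w) - (2 * π * I : ℂ) • (1 : Matrix (Fin n) (Fin n) ℂ)‖
        ≤ 2 * π * ε := by
    intro ε hε
    -- find a bound from the tendsto lemma
    have htd : Tendsto (fun w : ℂ => res w * K) (Bornology.cobounded ℂ) (nhds 0) := by
      have hc : Continuous fun X : Matrix (Fin n) (Fin n) ℂ => X * K :=
        continuous_id.matrix_mul continuous_const
      have := (hc.continuousAt (x := 0)).tendsto.comp (tendsto_resolvent_cobounded M)
      simpa [Function.comp_def] using this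
    have hev : ∀ᶠ w : ℂ in Bornology.cobounded ℂ, ‖res w * K‖ < ε := by
      have h0' : Tendsto (fun w : ℂ => ‖res w * K‖) (Bornology.cobounded ℂ) (nhds 0) := by
        simpa using htd.norm
      exact h0'.eventually_lt_const hε
    rw [← comap_norm_atTop, eventually_comap, eventually_atTop] at hev
    obtain ⟨b, hb⟩ := hev
    set R : ℝ := max r₀ (b + ‖c₀‖) with hRdef
    have hRr : r₀ ≤ R := le_max_left _ _
    have hR0 : 0 < R := lt_of_lt_of_le h0 hRr
    have hsmall : ∀ w ∈ sphere c₀ R, ‖res w * K‖ < ε := by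
      intro w hw
      refine hb ‖w‖ ?_ w rfl
      have h1 : ‖w - c₀‖ = R := by rwa [mem_sphere_iff_norm] at hw
      have h2 : ‖w - c₀‖ - ‖c₀‖ ≤ ‖w‖ := by
        have := norm_sub_norm_le (w - c₀) (-c₀)
        simpa using this
      have : b + ‖c₀‖ ≤ R := le_max_right _ _
      linarith
    -- points on the sphere are off the spectrum and ≠ c₀
    have hoff : ∀ w ∈ sphere c₀ R, w ∉ spectrum ℂ M := fun w hw =>
      hnotspec w (le_trans hRr (le_of_eq (mem_sphere.mp hw).symm))
    have hne : ∀ w ∈ sphere c₀ R, w ≠ c₀ := by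
      intro w hw h
      rw [h, mem_sphere, dist_self] at hw
      exact absurd hw.symm (ne_of_gt hR0)
    -- split the integral
    have hcont1 : CircleIntegrable (fun w => (w - c₀)⁻¹ • (1 : Matrix (Fin n) (Fin n) ℂ))
        c₀ R := by
      refine ContinuousOn.circleIntegrable hR0.le ?_
      refine ContinuousOn.fun_smul ?_ continuousOn_const
      exact ContinuousOn.inv₀ (by fun_prop) fun w hw => sub_ne_zero.mpr (hne w hw)
    have hcont2 : CircleIntegrable (fun w => (w - c₀)⁻¹ • (res w * K)) c₀ R := by
      refine ContinuousOn.circleIntegrable hR0.le ?_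
      refine ContinuousOn.smul
        (ContinuousOn.inv₀ (by fun_prop) fun w hw => sub_ne_zero.mpr (hne w hw)) ?_
      exact (continuousOn_resolvent hoff).mul continuousOn_const
    have hsplit : (∮ w in C(c₀, R), res w) =
        (∮ w in C(c₀, R), (w - c₀)⁻¹ • (1 : Matrix (Fin n) (Fin n) ℂ)) +
        ∮ w in C(c₀, R), (w - c₀)⁻¹ • (res w * K) := by
      rw [← circleIntegral_add hcont1 hcont2]
      refine circleIntegral.integral_congr hR0.le fun w hw => ?_
      exact hdecomp w (hne w hw) (hoff w hw)
    have hfirst : (∮ w in C(c₀, R), (w - c₀)⁻¹ • (1 : Matrix (Fin n) (Fin n) ℂ)) =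
        (2 * π * I : ℂ) • (1 : Matrix (Fin n) (Fin n) ℂ) := by
      rw [circleIntegral.integral_smul_const, circleIntegral.integral_sub_inv_of_mem_ball
        (mem_ball_self hR0)]
    have hbound : ‖∮ w in C(c₀, R), (w - c₀)⁻¹ • (res w * K)‖ ≤ 2 * π * R * (R⁻¹ * ε) := by
      refine circleIntegral.norm_integral_le_of_norm_le_const hR0.le fun w hw => ?_
      rw [norm_smul]
      have h1 : ‖w - c₀‖ = R := by rwa [mem_sphere_iff_norm] at hw
      rw [norm_inv, h1]
      exact mul_le_mul_of_nonneg_left (le_of_lt (hsmall w hw)) (inv_nonneg.mpr hR0.le)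
    rw [← hconst R hRr, hsplit, hfirst, add_sub_cancel_left]
    calc ‖∮ w in C(c₀, R), (w - c₀)⁻¹ • (res w * K)‖ ≤ 2 * π * R * (R⁻¹ * ε) := hbound
      _ = 2 * π * ε := by field_simp
  -- conclude
  have hz : ‖(∮ w in C(c₀, r₀), res w) - (2 * π * I : ℂ) • (1 : Matrix (Fin n) (Fin n) ℂ)‖
      ≤ 0 := by
    by_contra h
    push_neg at h
    set d := ‖(∮ w in C(c₀, r₀), res w) - (2 * π * I : ℂ) • (1 : Matrix (Fin n) (Fin n) ℂ)‖
    have hd : 0 < d := h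
    have := key (d / (4 * π)) (by positivity)
    have hπ : 0 < π := Real.pi_pos
    have : d ≤ d / 2 := by
      calc d ≤ 2 * π * (d / (4 * π)) := this
        _ = d / 2 := by field_simp; ring
    linarith
  have := norm_le_zero_iff.mp hz
  exact sub_eq_zero.mp this

section mulhelpers

lemma circleIntegral_mul_right {a b d : ℕ} {f : ℂ → Matrix (Fin a) (Fin b) ℂ}
    {K : Matrix (Fin b) (Fin d) ℂ} {c : ℂ} {R : ℝ} (hf : CircleIntegrable f c R) :
    (∮ z in C(c, R), f z * K) = (∮ z in C(c, R), f z) * K := by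
  let L : Matrix (Fin a) (Fin b) ℂ →ₗ[ℂ] Matrix (Fin a) (Fin d) ℂ :=
    { toFun := fun X => X * K
      map_add' := fun X Y => Matrix.add_mul X Y K
      map_smul' := fun t X => Matrix.smul_mul t X K }
  exact circleIntegral_CLM L.toContinuousLinearMap hf

lemma circleIntegral_mul_left {a b d : ℕ} {f : ℂ → Matrix (Fin b) (Fin d) ℂ}
    {K : Matrix (Fin a) (Fin b) ℂ} {c : ℂ} {R : ℝ} (hf : CircleIntegrable f c R) :
    (∮ z in C(c, R), K * f z) = K * ∮ z in C(c, R), f z := by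
  let L : Matrix (Fin b) (Fin d) ℂ →ₗ[ℂ] Matrix (Fin a) (Fin d) ℂ :=
    { toFun := fun X => K * X
      map_add' := fun X Y => Matrix.mul_add K X Y
      map_smul' := fun t X => Matrix.mul_smul K t X }
  exact circleIntegral_CLM L.toContinuousLinearMap hf

end mulhelpers

lemma circleIntegral_resolvent_kernel {n : ℕ} (M : Matrix (Fin n) (Fin n) ℂ) (c₀ : ℂ) (r₀ : ℝ)
    (h0 : 0 < r₀) (hspec : spectrum ℂ M ⊆ ball c₀ r₀) {ζ : ℂ} (hζ : ζ ∉ closedBall c₀ r₀) :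
    (∮ w in C(c₀, r₀), (ζ - w)⁻¹ • (w • (1 : Matrix (Fin n) (Fin n) ℂ) - M)⁻¹) =
      (2 * π * I : ℂ) • (ζ • (1 : Matrix (Fin n) (Fin n) ℂ) - M)⁻¹ := by
  set res : ℂ → Matrix (Fin n) (Fin n) ℂ := fun w => (w • 1 - M)⁻¹ with hres
  have hζs : ζ ∉ spectrum ℂ M := fun h => hζ (ball_subset_closedBall (hspec h))
  have hsphere_off : ∀ w ∈ sphere c₀ r₀, w ∉ spectrum ℂ M := by
    intro w hw h
    have := hspec h
    rw [mem_ball] at this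
    rw [mem_sphere] at hw
    linarith [hw ▸ this]
  have hζne : ∀ w ∈ sphere c₀ r₀, ζ ≠ w := by
    intro w hw h
    exact hζ (h ▸ sphere_subset_closedBall hw)
  -- pointwise identity on the sphere
  have hid : ∀ w ∈ sphere c₀ r₀,
      (ζ - w)⁻¹ • res w = (ζ - w)⁻¹ • res ζ + res ζ * res w := by
    intro w hw
    have hwu := isUnit_of_not_spectrum (hsphere_off w hw)
    have hζu := isUnit_of_not_spectrum hζs
    have h1 : (w • (1 : Matrix (Fin n) (Fin n) ℂ) - M) * res w = 1 :=
      Matrix.mul_nonsing_inv _ ((Matrix.isUnit_iff_isUnit_det _).mp hwu)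
    have h2 : res ζ * (ζ • (1 : Matrix (Fin n) (Fin n) ℂ) - M) = 1 :=
      Matrix.nonsing_inv_mul _ ((Matrix.isUnit_iff_isUnit_det _).mp hζu)
    have key : res w = res ζ + (ζ - w) • (res ζ * res w) := by
      calc res w = 1 * res w := (Matrix.one_mul _).symm
        _ = (res ζ * (ζ • (1 : Matrix (Fin n) (Fin n) ℂ) - M)) * res w := by rw [h2]
        _ = res ζ * (((w • (1 : Matrix (Fin n) (Fin n) ℂ) - M) + (ζ - w) • 1) * res w) := by
            rw [Matrix.mul_assoc]; congr 2; rw [sub_smul]; abel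
        _ = res ζ + (ζ - w) • (res ζ * res w) := by
            rw [Matrix.add_mul, h1, Matrix.smul_mul, Matrix.one_mul, Matrix.mul_add,
              Matrix.mul_one, Matrix.mul_smul]
    have hne : ζ - w ≠ 0 := sub_ne_zero.mpr (hζne w hw)
    conv_lhs => rw [key]
    rw [smul_add, smul_smul, inv_mul_cancel₀ hne, one_smul]
  have hcont_res : ContinuousOn res (sphere c₀ r₀) := continuousOn_resolvent hsphere_off
  have hcont_ker : ContinuousOn (fun w => (ζ - w)⁻¹) (sphere c₀ r₀) :=
    ContinuousOn.inv₀ (by fun_prop) fun w hw => sub_ne_zero.mpr (hζne w hw)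
  have hint1 : CircleIntegrable (fun w => (ζ - w)⁻¹ • res ζ) c₀ r₀ :=
    ContinuousOn.circleIntegrable h0.le (hcont_ker.smul continuousOn_const)
  have hint2 : CircleIntegrable (fun w => res ζ * res w) c₀ r₀ :=
    ContinuousOn.circleIntegrable h0.le (((continuous_const.matrix_mul continuous_id :
      Continuous fun X : Matrix (Fin n) (Fin n) ℂ => res ζ * X)).comp_continuousOn hcont_res)
  have hsplit : (∮ w in C(c₀, r₀), (ζ - w)⁻¹ • res w) =
      (∮ w in C(c₀, r₀), (ζ - w)⁻¹ • res ζ) + ∮ w in C(c₀, r₀), res ζ * res w := by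
    rw [← circleIntegral_add hint1 hint2]
    exact circleIntegral.integral_congr h0.le fun w hw => hid w hw
  have hfirst : (∮ w in C(c₀, r₀), (ζ - w)⁻¹ • res ζ) = 0 := by
    refine circleIntegral_eq_zero_of_differentiable_on_off_countable h0.le
      Set.countable_empty ?_ ?_
    · refine ContinuousOn.fun_smul (ContinuousOn.inv₀ (by fun_prop) fun w hw => ?_)
        continuousOn_const
      exact sub_ne_zero.mpr fun h => hζ (h ▸ hw)
    · intro z hz
      refine DifferentiableAt.smul_const (DifferentiableAt.inv ?_ ?_) _
      · fun_prop
      · exact sub_ne_zero.mpr fun h => hζ (h ▸ ball_subset_closedBall hz.1)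
  have hsecond : (∮ w in C(c₀, r₀), res ζ * res w) = (2 * π * I : ℂ) • res ζ := by
    rw [circleIntegral_mul_left (ContinuousOn.circleIntegrable h0.le hcont_res),
      circleIntegral_resolvent M c₀ r₀ h0 hspec, Matrix.mul_smul, Matrix.mul_one]
  rw [hsplit, hfirst, hsecond, zero_add]

lemma circleIntegral_swap {E : Type*} [NormedAddCommGroup E] [NormedSpace ℂ E]
    {F : ℂ → ℂ → E} {c₁ c₂ : ℂ} {r₁ r₂ : ℝ}
    (hF : Continuous fun p : ℝ × ℝ => F (circleMap c₁ r₁ p.1) (circleMap c₂ r₂ p.2)) :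
    (∮ z in C(c₂, r₂), ∮ w in C(c₁, r₁), F w z) =
      ∮ w in C(c₁, r₁), ∮ z in C(c₂, r₂), F w z := by
  set G : ℝ × ℝ → E := fun p =>
    deriv (circleMap c₁ r₁) p.1 • deriv (circleMap c₂ r₂) p.2 •
      F (circleMap c₁ r₁ p.1) (circleMap c₂ r₂ p.2) with hG
  have hGc : Continuous G := by
    simp only [hG, deriv_circleMap]
    exact (((continuous_circleMap 0 r₁).comp continuous_fst).mul continuous_const).smul
      ((((continuous_circleMap 0 r₂).comp continuous_snd).mul continuous_const).smul hF)
  have key : (∫ θ₂ in (0:ℝ)..(2*π), ∫ θ₁ in (0:ℝ)..(2*π), G (θ₁, θ₂)) =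
      ∫ θ₁ in (0:ℝ)..(2*π), ∫ θ₂ in (0:ℝ)..(2*π), G (θ₁, θ₂) := by
    simp only [intervalIntegral.integral_of_le Real.two_pi_pos.le]
    rw [MeasureTheory.integral_integral_swap]
    have : IntegrableOn (fun p : ℝ × ℝ => G (p.2, p.1))
        ((Set.Ioc (0:ℝ) (2*π)) ×ˢ (Set.Ioc (0:ℝ) (2*π))) (volume.prod volume) := by
      refine MeasureTheory.IntegrableOn.mono_set ?_
        (Set.prod_mono Set.Ioc_subset_Icc_self Set.Ioc_subset_Icc_self)
      exact (hGc.comp continuous_swap).continuousOn.integrableOn_compact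
        (isCompact_Icc.prod isCompact_Icc)
    rw [Measure.prod_restrict]
    exact this
  calc (∮ z in C(c₂, r₂), ∮ w in C(c₁, r₁), F w z)
      = ∫ θ₂ in (0:ℝ)..(2*π), ∫ θ₁ in (0:ℝ)..(2*π), G (θ₁, θ₂) := by
        simp only [circleIntegral, hG]
        congr 1
        funext θ₂
        rw [← intervalIntegral.integral_smul]
        congr 1
        funext θ₁
        rw [smul_comm]
    _ = ∫ θ₁ in (0:ℝ)..(2*π), ∫ θ₂ in (0:ℝ)..(2*π), G (θ₁, θ₂) := key
    _ = ∮ w in C(c₁, r₁), ∮ z in C(c₂, r₂), F w z := by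
        simp only [circleIntegral, hG]
        congr 1
        funext θ₁
        rw [← intervalIntegral.integral_smul]

lemma cauchy_dd {c : ℂ} {r : ℝ} (hr : 0 < r) {f : ℂ → ℂ}
    (hd : DiffContOnCl ℂ f (ball c r)) {w z : ℂ} (hw : w ∈ ball c r) (hz : z ∈ ball c r)
    (hwz : w ≠ z) :
    (∮ ζ in C(c, r), f ζ * ((ζ - w)⁻¹ * (ζ - z)⁻¹)) =
      (2 * π * I : ℂ) * ((f w - f z) / (w - z)) := by
  have hfc : ContinuousOn f (closedBall c r) := by
    have := hd.continuousOn
    rwa [closure_ball c hr.ne'] at this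
  have hsph : sphere c r ⊆ closedBall c r := sphere_subset_closedBall
  have hζw : ∀ ζ ∈ sphere c r, ζ - w ≠ 0 := fun ζ hζ => sub_ne_zero.mpr fun h =>
    (by rw [← h] at hw; exact absurd (mem_sphere.mp hζ) (by rw [mem_ball] at hw; linarith))
  have hζz : ∀ ζ ∈ sphere c r, ζ - z ≠ 0 := fun ζ hζ => sub_ne_zero.mpr fun h =>
    (by rw [← h] at hz; exact absurd (mem_sphere.mp hζ) (by rw [mem_ball] at hz; linarith))
  have hwz' : w - z ≠ 0 := sub_ne_zero.mpr hwz
  have hint1 : CircleIntegrable (fun ζ => (ζ - w)⁻¹ • f ζ) c r := by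
    refine ContinuousOn.circleIntegrable hr.le ?_
    exact (ContinuousOn.inv₀ (by fun_prop) hζw).smul (hfc.mono hsph)
  have hint2 : CircleIntegrable (fun ζ => (ζ - z)⁻¹ • f ζ) c r := by
    refine ContinuousOn.circleIntegrable hr.le ?_
    exact (ContinuousOn.inv₀ (by fun_prop) hζz).smul (hfc.mono hsph)
  have hcongr : (∮ ζ in C(c, r), f ζ * ((ζ - w)⁻¹ * (ζ - z)⁻¹)) =
      ∮ ζ in C(c, r), (w - z)⁻¹ • ((ζ - w)⁻¹ • f ζ - (ζ - z)⁻¹ • f ζ) := by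
    refine circleIntegral.integral_congr hr.le fun ζ hζ => ?_
    have h1 := hζw ζ hζ
    have h2 := hζz ζ hζ
    simp only [smul_eq_mul]
    field_simp
    ring
  rw [hcongr, circleIntegral.integral_smul, circleIntegral.integral_sub hint1 hint2,
    hd.circleIntegral_sub_inv_smul hw, hd.circleIntegral_sub_inv_smul hz]
  simp only [smul_eq_mul]
  field_simp

lemma circleIntegral_congr_ae_ne {E : Type*} [NormedAddCommGroup E] [NormedSpace ℂ E]
    {f g : ℂ → E} {c₀ z : ℂ} {R : ℝ} (hR : 0 < R)
    (h : ∀ w ∈ sphere c₀ R, w ≠ z → f w = g w) :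
    (∮ w in C(c₀, R), f w) = ∮ w in C(c₀, R), g w := by
  simp only [circleIntegral]
  have hcount : (circleMap c₀ R ⁻¹' {z}).Countable :=
    (Set.countable_singleton z).preimage_circleMap c₀ hR.ne'
  refine intervalIntegral.integral_congr_ae ((hcount.ae_notMem volume).mono fun θ hθ _ => ?_)
  rw [h _ (circleMap_mem_sphere c₀ hR.le θ) hθ]

theorem dividedDifference_double_contour_eq_single_contour
    (ν μ : ℕ) (A : Matrix (Fin ν) (Fin ν) ℂ) (B : Matrix (Fin μ) (Fin μ) ℂ)
    (H : Matrix (Fin ν) (Fin μ) ℂ)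
    (c₁ c₂ c : ℂ) (r₁ r₂ r : ℝ) (hr₁ : 0 < r₁) (hr₂ : 0 < r₂) (hr : 0 < r)
    (hA : spectrum ℂ A ⊆ Metric.ball c₁ r₁)
    (hB : spectrum ℂ B ⊆ Metric.ball c₂ r₂)
    (h₁ : Metric.closedBall c₁ r₁ ⊆ Metric.ball c r)
    (h₂ : Metric.closedBall c₂ r₂ ⊆ Metric.ball c r)
    (U : Set ℂ) (hU : IsOpen U) (hUr : Metric.closedBall c r ⊆ U)
    (f : ℂ → ℂ) (hf : AnalyticOnNhd ℂ f U)
    (f1 : ℂ × ℂ → ℂ)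
    (hf1 : ∀ p : ℂ × ℂ,
      f1 p = if p.1 = p.2 then deriv f p.1 else (f p.1 - f p.2) / (p.1 - p.2)) :
    ((1 / (2 * π * I)) ^ 2 : ℂ) •
      (∮ z in C(c₂, r₂), ∮ w in C(c₁, r₁),
        f1 (w, z) • ((w • (1 : Matrix (Fin ν) (Fin ν) ℂ) - A)⁻¹ * H *
          (z • (1 : Matrix (Fin μ) (Fin μ) ℂ) - B)⁻¹)) =
    ((1 / (2 * π * I)) : ℂ) •
      ∮ w in C(c, r),
        f w • ((w • (1 : Matrix (Fin ν) (Fin ν) ℂ) - A)⁻¹ * H *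
          (w • (1 : Matrix (Fin μ) (Fin μ) ℂ) - B)⁻¹) := by
  set RA : ℂ → Matrix (Fin ν) (Fin ν) ℂ := fun w => (w • 1 - A)⁻¹ with hRA
  set RB : ℂ → Matrix (Fin μ) (Fin μ) ℂ := fun w => (w • 1 - B)⁻¹ with hRB
  have h2πi : (2 * π * I : ℂ) ≠ 0 := Complex.two_pi_I_ne_zero
  -- basic geometry
  have hs₁ball : sphere c₁ r₁ ⊆ ball c r := fun w hw => h₁ (sphere_subset_closedBall hw)
  have hs₂ball : sphere c₂ r₂ ⊆ ball c r := fun w hw => h₂ (sphere_subset_closedBall hw)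
  have hcoutA : ∀ ζ ∈ sphere c r, ζ ∉ closedBall c₁ r₁ := by
    intro ζ hζ h
    have := h₁ h
    rw [mem_ball] at this
    rw [mem_sphere] at hζ
    linarith
  have hcoutB : ∀ ζ ∈ sphere c r, ζ ∉ closedBall c₂ r₂ := by
    intro ζ hζ h
    have := h₂ h
    rw [mem_ball] at this
    rw [mem_sphere] at hζ
    linarith
  have hsphA : ∀ w ∈ sphere c₁ r₁, w ∉ spectrum ℂ A := by
    intro w hw h
    have := hA h
    rw [mem_ball] at this
    rw [mem_sphere] at hw
    linarith
  have hsphB : ∀ z ∈ sphere c₂ r₂, z ∉ spectrum ℂ B := by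
    intro z hz h
    have := hB h
    rw [mem_ball] at this
    rw [mem_sphere] at hz
    linarith
  have hζA : ∀ ζ ∈ sphere c r, ζ ∉ spectrum ℂ A := fun ζ hζ h =>
    hcoutA ζ hζ (ball_subset_closedBall (hA h))
  have hζB : ∀ ζ ∈ sphere c r, ζ ∉ spectrum ℂ B := fun ζ hζ h =>
    hcoutB ζ hζ (ball_subset_closedBall (hB h))
  -- analytic facts about f
  have hfd : DiffContOnCl ℂ f (ball c r) := by
    refine DifferentiableOn.diffContOnCl ?_
    rw [closure_ball c hr.ne']
    exact (hf.differentiableOn).mono hUr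
  have hfc : ContinuousOn f (closedBall c r) := by
    have := hfd.continuousOn
    rwa [closure_ball c hr.ne'] at this
  -- continuity of resolvents
  have hRAs : ContinuousOn RA (sphere c₁ r₁) := continuousOn_resolvent hsphA
  have hRBs : ContinuousOn RB (sphere c₂ r₂) := continuousOn_resolvent hsphB
  have hRAc : ContinuousOn RA (sphere c r) := continuousOn_resolvent hζA
  have hRBc : ContinuousOn RB (sphere c r) := continuousOn_resolvent hζB
  -- Step 1 : evaluate the inner integral for z on the inner circle
  have step1 : ∀ z ∈ sphere c₂ r₂,
      (∮ w in C(c₁, r₁), f1 (w, z) • (RA w * H * RB z)) =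
        ∮ ζ in C(c, r), (f ζ * (ζ - z)⁻¹) • (RA ζ * H * RB z) := by
    intro z hz
    have hzball : z ∈ ball c r := hs₂ball hz
    -- (a) replace f1 by the Cauchy integral
    have ha : (∮ w in C(c₁, r₁), f1 (w, z) • (RA w * H * RB z)) =
        ∮ w in C(c₁, r₁), (2 * π * I : ℂ)⁻¹ •
          ∮ ζ in C(c, r), (f ζ * ((ζ - w)⁻¹ * (ζ - z)⁻¹)) • (RA w * H * RB z) := by
      refine circleIntegral_congr_ae_ne (z := z) hr₁ fun w hwmem hwz => ?_
      have hwball : w ∈ ball c r := hs₁ball hwmem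
      rw [circleIntegral.integral_smul_const, cauchy_dd hr hfd hwball hzball hwz, hf1]
      simp only [if_neg hwz]
      rw [smul_smul, inv_mul_cancel_left₀ h2πi]
    rw [ha, circleIntegral.integral_smul]
    -- (b) swap the two integrals
    have hswap : (∮ w in C(c₁, r₁), ∮ ζ in C(c, r),
        (f ζ * ((ζ - w)⁻¹ * (ζ - z)⁻¹)) • (RA w * H * RB z)) =
        ∮ ζ in C(c, r), ∮ w in C(c₁, r₁),
          (f ζ * ((ζ - w)⁻¹ * (ζ - z)⁻¹)) • (RA w * H * RB z) := by
      refine circleIntegral_swap (F := fun ζ w =>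
        (f ζ * ((ζ - w)⁻¹ * (ζ - z)⁻¹)) • (RA w * H * RB z)) ?_
      have hf1c : Continuous fun p : ℝ × ℝ => f (circleMap c r p.1) :=
        hfc.comp_continuous ((continuous_circleMap c r).comp continuous_fst)
          fun p => sphere_subset_closedBall (circleMap_mem_sphere c hr.le _)
      have hk1 : Continuous fun p : ℝ × ℝ =>
          (circleMap c r p.1 - circleMap c₁ r₁ p.2)⁻¹ := by
        refine Continuous.inv₀ (by fun_prop) fun p => sub_ne_zero.mpr fun h => ?_
        exact hcoutA _ (circleMap_mem_sphere c hr.le _)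
          (h ▸ sphere_subset_closedBall (circleMap_mem_sphere c₁ hr₁.le _))
      have hk2 : Continuous fun p : ℝ × ℝ => (circleMap c r p.1 - z)⁻¹ := by
        refine Continuous.inv₀ (by fun_prop) fun p => sub_ne_zero.mpr fun h => ?_
        have := circleMap_mem_sphere c hr.le p.1
        rw [h] at this
        rw [mem_sphere] at this
        rw [mem_ball] at hzball
        linarith
      have hRAm : Continuous fun p : ℝ × ℝ => RA (circleMap c₁ r₁ p.2) :=
        hRAs.comp_continuous ((continuous_circleMap c₁ r₁).comp continuous_snd)
          fun p => circleMap_mem_sphere c₁ hr₁.le _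
      exact (hf1c.mul (hk1.mul hk2)).smul
        ((hRAm.matrix_mul continuous_const).matrix_mul continuous_const)
    rw [hswap]
    -- (c) evaluate the inner integral over w
    have hinner : ∀ ζ ∈ sphere c r,
        (∮ w in C(c₁, r₁), (f ζ * ((ζ - w)⁻¹ * (ζ - z)⁻¹)) • (RA w * H * RB z)) =
          (2 * π * I : ℂ) • ((f ζ * (ζ - z)⁻¹) • (RA ζ * H * RB z)) := by
      intro ζ hζ
      have hptw : ∀ w : ℂ, (f ζ * ((ζ - w)⁻¹ * (ζ - z)⁻¹)) • (RA w * H * RB z) =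
          (f ζ * (ζ - z)⁻¹) • (((ζ - w)⁻¹ • RA w) * (H * RB z)) := by
        intro w
        rw [Matrix.smul_mul, smul_smul, ← Matrix.mul_assoc]
        congr 1
        ring
      have hintRA : CircleIntegrable (fun w => (ζ - w)⁻¹ • RA w) c₁ r₁ := by
        refine ContinuousOn.circleIntegrable hr₁.le ?_
        refine ContinuousOn.fun_smul (ContinuousOn.inv₀ (by fun_prop)
          fun w hw => sub_ne_zero.mpr fun h => ?_) hRAs
        exact hcoutA ζ hζ (h ▸ sphere_subset_closedBall hw)
      calc (∮ w in C(c₁, r₁), (f ζ * ((ζ - w)⁻¹ * (ζ - z)⁻¹)) • (RA w * H * RB z))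
          = ∮ w in C(c₁, r₁), (f ζ * (ζ - z)⁻¹) •
            (((ζ - w)⁻¹ • RA w) * (H * RB z)) :=
            circleIntegral.integral_congr hr₁.le fun w _ => hptw w
        _ = (f ζ * (ζ - z)⁻¹) •
            ((∮ w in C(c₁, r₁), (ζ - w)⁻¹ • RA w) * (H * RB z)) := by
            rw [circleIntegral.integral_smul, circleIntegral_mul_right hintRA]
        _ = (2 * π * I : ℂ) • ((f ζ * (ζ - z)⁻¹) • (RA ζ * H * RB z)) := by
            rw [circleIntegral_resolvent_kernel A c₁ r₁ hr₁ hA (hcoutA ζ hζ),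
              Matrix.smul_mul, ← Matrix.mul_assoc, smul_comm]
    rw [circleIntegral.integral_congr hr.le fun ζ hζ => hinner ζ hζ,
      circleIntegral.integral_smul, smul_smul, inv_mul_cancel₀ h2πi, one_smul]
  -- Step 2 : outer integral
  have houter : (∮ z in C(c₂, r₂), ∮ w in C(c₁, r₁), f1 (w, z) • (RA w * H * RB z)) =
      ∮ z in C(c₂, r₂), ∮ ζ in C(c, r), (f ζ * (ζ - z)⁻¹) • (RA ζ * H * RB z) :=
    circleIntegral.integral_congr hr₂.le fun z hz => step1 z hz
  have hswap2 : (∮ z in C(c₂, r₂), ∮ ζ in C(c, r),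
      (f ζ * (ζ - z)⁻¹) • (RA ζ * H * RB z)) =
      ∮ ζ in C(c, r), ∮ z in C(c₂, r₂), (f ζ * (ζ - z)⁻¹) • (RA ζ * H * RB z) := by
    refine circleIntegral_swap (F := fun ζ z =>
      (f ζ * (ζ - z)⁻¹) • (RA ζ * H * RB z)) ?_
    have hf1c : Continuous fun p : ℝ × ℝ => f (circleMap c r p.1) :=
      hfc.comp_continuous ((continuous_circleMap c r).comp continuous_fst)
        fun p => sphere_subset_closedBall (circleMap_mem_sphere c hr.le _)
    have hk : Continuous fun p : ℝ × ℝ =>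
        (circleMap c r p.1 - circleMap c₂ r₂ p.2)⁻¹ := by
      refine Continuous.inv₀ (by fun_prop) fun p => sub_ne_zero.mpr fun h => ?_
      exact hcoutB _ (circleMap_mem_sphere c hr.le _)
        (h ▸ sphere_subset_closedBall (circleMap_mem_sphere c₂ hr₂.le _))
    have hRAm : Continuous fun p : ℝ × ℝ => RA (circleMap c r p.1) :=
      hRAc.comp_continuous ((continuous_circleMap c r).comp continuous_fst)
        fun p => circleMap_mem_sphere c hr.le _
    have hRBm : Continuous fun p : ℝ × ℝ => RB (circleMap c₂ r₂ p.2) :=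
      hRBs.comp_continuous ((continuous_circleMap c₂ r₂).comp continuous_snd)
        fun p => circleMap_mem_sphere c₂ hr₂.le _
    exact (hf1c.mul hk).smul ((hRAm.matrix_mul continuous_const).matrix_mul hRBm)
  have hinner2 : ∀ ζ ∈ sphere c r,
      (∮ z in C(c₂, r₂), (f ζ * (ζ - z)⁻¹) • (RA ζ * H * RB z)) =
        (2 * π * I : ℂ) • (f ζ • (RA ζ * H * RB ζ)) := by
    intro ζ hζ
    have hptw : ∀ z : ℂ, (f ζ * (ζ - z)⁻¹) • (RA ζ * H * RB z) =
        f ζ • ((RA ζ * H) * ((ζ - z)⁻¹ • RB z)) := by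
      intro z
      rw [Matrix.mul_smul, smul_smul]
    have hintRB : CircleIntegrable (fun z => (ζ - z)⁻¹ • RB z) c₂ r₂ := by
      refine ContinuousOn.circleIntegrable hr₂.le ?_
      refine ContinuousOn.fun_smul (ContinuousOn.inv₀ (by fun_prop)
        fun z hz => sub_ne_zero.mpr fun h => ?_) hRBs
      exact hcoutB ζ hζ (h ▸ sphere_subset_closedBall hz)
    calc (∮ z in C(c₂, r₂), (f ζ * (ζ - z)⁻¹) • (RA ζ * H * RB z))
        = ∮ z in C(c₂, r₂), f ζ • ((RA ζ * H) * ((ζ - z)⁻¹ • RB z)) :=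
          circleIntegral.integral_congr hr₂.le fun z _ => hptw z
      _ = f ζ • ((RA ζ * H) * ∮ z in C(c₂, r₂), (ζ - z)⁻¹ • RB z) := by
          rw [circleIntegral.integral_smul, circleIntegral_mul_left hintRB]
      _ = (2 * π * I : ℂ) • (f ζ • (RA ζ * H * RB ζ)) := by
          rw [circleIntegral_resolvent_kernel B c₂ r₂ hr₂ hB (hcoutB ζ hζ),
            Matrix.mul_smul, smul_comm]
  rw [houter, hswap2, circleIntegral.integral_congr hr.le fun ζ hζ => hinner2 ζ hζ,
    circleIntegral.integral_smul, smul_smul]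
  congr 1
  field_simp
end

section
/- Let A be a ν×ν complex matrix, B a μ×μ complex matrix, H a ν×μ complex matrix, and let T = Matrix.fromBlocks A H 0 B. Let c₁, c₂, c ∈ ℂ and r₁, r₂, r > 0 be such that the spectrum of A lies in the open disc of center c₁ and radius r₁, the spectrum of B lies in the open disc of center c₂ and radius r₂, the spectrum of T lies in the open disc of center c and radius r, and f : ℂ → ℂ is analytic on an open set containing the closed disc of center c and radius r together with the closed discs ball(c₁,r₁) and ball(c₂,r₂). Then the upper-right (ν×μ) block of F = (1/(2πi)) ∮_{|λ−c|=r} f(λ)(λI − T)⁻¹ dλ equals the divided difference of f applied to A and B at H: F.toBlocks₁₂ = (1/(2πi))² ∮_{|μ−c₂|=r₂} ∮_{|λ−c₁|=r₁} f^{[1]}(λ,μ) (λI − A)⁻¹ H (μI − B)⁻¹ dλ dμ. -/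
open Matrix Complex Real Metric Filter
open scoped Topology
attribute [local instance] Matrix.normedAddCommGroup Matrix.normedSpace

noncomputable section
namespace DDaux

def Pl (L : List ℂ) (w : ℂ) : ℂ := (L.map (fun t => w - t)).prod
@[simp] lemma Pl_nil (w : ℂ) : Pl [] w = 1 := rfl
@[simp] lemma Pl_cons (t : ℂ) (L : List ℂ) (w : ℂ) :
    Pl (t :: L) w = (w - t) * Pl L w := by simp [Pl]
lemma Pl_append (L M : List ℂ) (w : ℂ) :
    Pl (L ++ M) w = Pl L w * Pl M w := by simp [Pl]
lemma Pl_ne_zero {L : List ℂ} {w : ℂ} (h : ∀ t ∈ L, w ≠ t) : Pl L w ≠ 0 := by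
  induction L with
  | nil => simp [Pl]
  | cons t L ih =>
    simp only [Pl_cons]
    exact mul_ne_zero (sub_ne_zero.2 (h t (by simp))) (ih fun s hs => h s (by simp [hs]))
lemma Pl_funext_nil : Pl ([]:List ℂ) = fun _ => (1:ℂ) := by funext w; simp
lemma Pl_funext_cons (t : ℂ) (L : List ℂ) :
    Pl (t :: L) = fun w => (w - t) * Pl L w := by funext w; simp
lemma continuous_Pl (L : List ℂ) : Continuous (Pl L) := by
  induction L with
  | nil => rw [Pl_funext_nil]; exact continuous_const
  | cons t L ih => rw [Pl_funext_cons]; exact (continuous_id.sub continuous_const).mul ih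
lemma differentiable_Pl (L : List ℂ) : Differentiable ℂ (Pl L) := by
  induction L with
  | nil => rw [Pl_funext_nil]; exact differentiable_const _
  | cons t L ih =>
    rw [Pl_funext_cons]; exact (differentiable_id.sub (differentiable_const _)).mul ih

lemma norm_Pl_ge {L : List ℂ} {c₀ : ℂ} {ρ : ℝ} (hmem : ∀ t ∈ L, t ∈ ball c₀ ρ)
    {R : ℝ} (hR : ρ ≤ R) {w : ℂ} (hw : w ∈ sphere c₀ R) :
    (R - ρ) ^ L.length ≤ ‖Pl L w‖ := by
  induction L with
  | nil => simp [Pl]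
  | cons t L ih =>
    have h1 : R - ρ ≤ ‖w - t‖ := by
      have h2 : dist t c₀ < ρ := mem_ball.1 (hmem t (by simp))
      have h3 : dist w c₀ = R := mem_sphere.1 hw
      have h4 : dist w c₀ ≤ dist w t + dist t c₀ := dist_triangle w t c₀
      have h5 : R - ρ ≤ dist w t := by linarith
      rwa [dist_eq_norm] at h5
    have h0 : (0:ℝ) ≤ R - ρ := by
      have h2 : dist t c₀ < ρ := mem_ball.1 (hmem t (by simp))
      have : 0 ≤ dist t c₀ := dist_nonneg
      linarith
    calc (R - ρ) ^ (t :: L).length = (R - ρ) * (R - ρ) ^ L.length := by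
          simp [pow_succ]; ring
      _ ≤ ‖w - t‖ * ‖Pl L w‖ := by
          exact mul_le_mul h1 (ih fun s hs => hmem s (by simp [hs]))
            (pow_nonneg h0 _) (norm_nonneg _)
      _ = ‖Pl (t :: L) w‖ := by rw [Pl_cons, norm_mul]

/-- contour integral of a product of simple poles, all inside the circle -/
lemma lemA {L : List ℂ} {c₀ : ℂ} {ρ : ℝ} (hρ : 0 < ρ)
    (hmem : ∀ t ∈ L, t ∈ ball c₀ ρ) :
    (∮ w in C(c₀, ρ), (Pl L w)⁻¹)
      = if L.length = 1 then (2 * π * I) else 0 := by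
  match L with
  | [] =>
    rw [if_neg (show ¬([]:List ℂ).length = 1 by simp)]
    have : (fun w => (Pl ([]:List ℂ) w)⁻¹) = fun _ => (1:ℂ) := by
      funext w; simp
    rw [show (∮ w in C(c₀, ρ), (Pl ([]:List ℂ) w)⁻¹) = ∮ w in C(c₀, ρ), (1:ℂ) from
      congrArg (fun g => circleIntegral g c₀ ρ) this]
    exact Complex.circleIntegral_eq_zero_of_differentiable_on_off_countable hρ.le
      Set.countable_empty continuousOn_const (fun z _ => differentiableAt_const _)
  | [t] =>
    simp only [List.length_singleton, if_pos rfl]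
    have : (fun w => (Pl [t] w)⁻¹) = fun w => (w - t)⁻¹ := by
      funext w; simp
    rw [show (∮ w in C(c₀, ρ), (Pl [t] w)⁻¹) = ∮ w in C(c₀, ρ), (w - t)⁻¹ from
      congrArg (fun g => circleIntegral g c₀ ρ) this]
    exact circleIntegral.integral_sub_inv_of_mem_ball (hmem t (by simp))
  | t :: s :: L' =>
    set L := t :: s :: L' with hL
    have hlen : 2 ≤ L.length := by simp [hL]
    simp only [if_neg (by omega : ¬ L.length = 1)]
    -- the integral is the same over all bigger circles
    have key : ∀ R : ℝ, ρ ≤ R →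
        (∮ w in C(c₀, R), (Pl L w)⁻¹) = ∮ w in C(c₀, ρ), (Pl L w)⁻¹ := by
      intro R hR
      refine Complex.circleIntegral_eq_of_differentiable_on_annulus_off_countable hρ hR
        Set.countable_empty ?_ ?_
      · intro w hw
        refine (ContinuousAt.continuousWithinAt ?_)
        refine ((continuous_Pl L).continuousAt).inv₀ (Pl_ne_zero ?_)
        intro u hu
        have h1 : u ∈ ball c₀ ρ := hmem u hu
        have : w ∉ ball c₀ ρ := fun hcon => hw.2 hcon
        intro he; exact this (he ▸ h1)
      · intro w hw
        refine DifferentiableAt.inv ((differentiable_Pl L) w) (Pl_ne_zero ?_)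
        intro u hu
        have h1 : u ∈ ball c₀ ρ := hmem u hu
        have h2 : w ∉ closedBall c₀ ρ := hw.1.2
        intro he
        exact h2 (he ▸ (ball_subset_closedBall h1))
    -- bound
    have bound : ∀ n : ℕ,
        ‖∮ w in C(c₀, ρ), (Pl L w)⁻¹‖ ≤ 2 * π * (ρ + n + 1) * (((n:ℝ)+1)^2)⁻¹ := by
      intro n
      have hRn : ρ ≤ ρ + n + 1 := by
        have : (0:ℝ) ≤ n := Nat.cast_nonneg n
        linarith
      rw [← key (ρ + n + 1) hRn]
      refine circleIntegral.norm_integral_le_of_norm_le_const (by linarith) ?_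
      intro z hz
      have h1 : ((n:ℝ)+1) ^ L.length ≤ ‖Pl L z‖ := by
        have := norm_Pl_ge hmem hRn hz
        have he : ρ + ↑n + 1 - ρ = (n:ℝ)+1 := by ring
        rwa [he] at this
      have h2 : ((n:ℝ)+1)^2 ≤ ((n:ℝ)+1) ^ L.length :=
        pow_le_pow_right₀ (by linarith [Nat.cast_nonneg (α := ℝ) n]) hlen
      have h3 : (0:ℝ) < ((n:ℝ)+1)^2 := by positivity
      rw [norm_inv]
      exact inv_anti₀ h3 (le_trans h2 h1)
    have t1 : Tendsto (fun n:ℕ => 2 * π * (ρ + n + 1) * (((n:ℝ)+1)^2)⁻¹) atTop (𝓝 0) := by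
      have he : (fun n:ℕ => 2 * π * (ρ + n + 1) * (((n:ℝ)+1)^2)⁻¹)
          = fun n:ℕ => (2 * π * ρ) * ((1/((n:ℝ)+1)) * (1/((n:ℝ)+1))) + (2*π) * (1/((n:ℝ)+1)) := by
        funext n
        have hne : ((n:ℝ)+1) ≠ 0 := by positivity
        field_simp
        ring
      rw [he]
      have h0 : Tendsto (fun n : ℕ => 1 / ((n:ℝ) + 1)) atTop (𝓝 0) :=
        tendsto_one_div_add_atTop_nhds_zero_nat
      have := ((h0.mul h0).const_mul (2*π*ρ)).add (h0.const_mul (2*π))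
      simpa using this
    have : ‖∮ w in C(c₀, ρ), (Pl L w)⁻¹‖ ≤ 0 := ge_of_tendsto' t1 bound
    exact norm_le_zero_iff.1 this

variable {E : Type*} [NormedAddCommGroup E] [NormedSpace ℂ E]

lemma circleIntegral_add {f g : ℂ → E} {c : ℂ} {R : ℝ} (hf : CircleIntegrable f c R)
    (hg : CircleIntegrable g c R) :
    (∮ z in C(c, R), (f z + g z)) = (∮ z in C(c, R), f z) + ∮ z in C(c, R), g z := by
  simp only [circleIntegral, smul_add, intervalIntegral.integral_add hf.out hg.out]

lemma circleIntegrable_finsetSum {ι : Type*} (s : Finset ι) {F : ι → ℂ → E} {c : ℂ} {R : ℝ}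
    (h : ∀ i ∈ s, CircleIntegrable (F i) c R) :
    CircleIntegrable (fun z => ∑ i ∈ s, F i z) c R := by
  classical
  induction s using Finset.induction with
  | empty => simpa using circleIntegrable_const (0:E) c R
  | insert a s hx ih =>
    have : (fun z => ∑ i ∈ insert a s, F i z)
        = (fun z => F a z + ∑ i ∈ s, F i z) := by
      funext z; rw [Finset.sum_insert hx]
    rw [this]
    exact (h a (by simp)).add (ih fun i hi => h i (by simp [hi]))

lemma circleIntegral_finsetSum {ι : Type*} (s : Finset ι) {F : ι → ℂ → E} {c : ℂ} {R : ℝ}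
    (h : ∀ i ∈ s, CircleIntegrable (F i) c R) :
    (∮ z in C(c, R), ∑ i ∈ s, F i z) = ∑ i ∈ s, ∮ z in C(c, R), F i z := by
  classical
  induction s using Finset.induction with
  | empty => simp [circleIntegral]
  | insert a s hx ih =>
    have e : (fun z => ∑ i ∈ insert a s, F i z)
        = (fun z => F a z + ∑ i ∈ s, F i z) := by
      funext z; rw [Finset.sum_insert hx]
    calc (∮ z in C(c, R), ∑ i ∈ insert a s, F i z)
        = ∮ z in C(c, R), (F a z + ∑ i ∈ s, F i z) := by rw [show (∮ z in C(c, R), ∑ i ∈ insert a s, F i z) = ∮ z in C(c, R), (F a z + ∑ i ∈ s, F i z) from congrArg (fun g => circleIntegral g c R) e]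
      _ = (∮ z in C(c, R), F a z) + ∮ z in C(c, R), ∑ i ∈ s, F i z :=
          circleIntegral_add (h a (by simp))
            (circleIntegrable_finsetSum s fun i hi => h i (by simp [hi]))
      _ = ∑ i ∈ insert a s, ∮ z in C(c, R), F i z := by
          rw [ih fun i hi => h i (by simp [hi]), Finset.sum_insert hx]




section DDdef

/-- Newton divided difference via iterated `dslope` -/
def dd : (ℂ → ℂ) → List ℂ → ℂ
  | _, [] => 0
  | g, [t] => g t
  | g, t :: s :: L => dd (dslope g t) (s :: L)

@[simp] lemma dd_nil (g : ℂ → ℂ) : dd g [] = 0 := rfl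
@[simp] lemma dd_single (g : ℂ → ℂ) (t : ℂ) : dd g [t] = g t := rfl
lemma dd_cons (g : ℂ → ℂ) (t : ℂ) {L : List ℂ} (hL : L ≠ []) :
    dd g (t :: L) = dd (dslope g t) L := by
  match L, hL with
  | s :: L', _ => rfl

/-- iterated dslope -/
def ddIter (g : ℂ → ℂ) : List ℂ → (ℂ → ℂ)
  | [] => g
  | t :: L => ddIter (dslope g t) L

lemma dd_ddIter (g : ℂ → ℂ) (M : List ℂ) {N : List ℂ} (hN : N ≠ []) :
    dd g (M ++ N) = dd (ddIter g M) N := by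
  induction M generalizing g with
  | nil => rfl
  | cons t M ih =>
    have h1 : M ++ N ≠ [] := by
      intro h; exact hN (List.append_eq_nil_iff.1 h).2
    rw [List.cons_append, dd_cons g t h1, ih (dslope g t)]
    rfl

lemma analyticOnNhd_dslope {U : Set ℂ} (hU : IsOpen U) {g : ℂ → ℂ}
    (hg : AnalyticOnNhd ℂ g U) {a : ℂ} (ha : a ∈ U) :
    AnalyticOnNhd ℂ (dslope g a) U := by
  intro z hz
  rcases eq_or_ne z a with rfl | hza
  · obtain ⟨p, hp⟩ := hg z hz
    exact hp.has_fpower_series_dslope_fslope.analyticAt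
  · have h1 : AnalyticAt ℂ (fun w => (g w - g a) / (w - a)) z :=
      ((hg z hz).sub analyticAt_const).div (analyticAt_id.sub analyticAt_const)
        (sub_ne_zero.2 hza)
    refine h1.congr ?_
    filter_upwards [eventually_ne_nhds hza] with w hw
    rw [dslope_of_ne _ hw, slope_def_field]

lemma analyticOnNhd_ddIter {U : Set ℂ} (hU : IsOpen U) {g : ℂ → ℂ}
    (hg : AnalyticOnNhd ℂ g U) {L : List ℂ} (hL : ∀ t ∈ L, t ∈ U) :
    AnalyticOnNhd ℂ (ddIter g L) U := by
  induction L generalizing g with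
  | nil => exact hg
  | cons t L ih =>
    exact ih (analyticOnNhd_dslope hU hg (hL t (by simp))) (fun s hs => hL s (by simp [hs]))

lemma eqOn_dslope_congr {U : Set ℂ} (hU : IsOpen U) {g g' : ℂ → ℂ}
    (h : Set.EqOn g g' U) {t : ℂ} (ht : t ∈ U) :
    Set.EqOn (dslope g t) (dslope g' t) U := by
  intro w hw
  rcases eq_or_ne w t with rfl | hwt
  · rw [dslope_same, dslope_same]
    exact Filter.EventuallyEq.deriv_eq (h.eventuallyEq_of_mem (hU.mem_nhds ht))
  · rw [dslope_of_ne _ hwt, dslope_of_ne _ hwt, slope_def_field, slope_def_field,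
      h hw, h ht]

lemma dd_congr {U : Set ℂ} (hU : IsOpen U) {g g' : ℂ → ℂ}
    (h : Set.EqOn g g' U) {L : List ℂ} (hL : ∀ t ∈ L, t ∈ U) :
    dd g L = dd g' L := by
  induction L generalizing g g' with
  | nil => rfl
  | cons t L ih =>
    match L, hL with
    | [], hL => simpa using h (hL t (by simp))
    | s :: L', hL =>
      rw [dd_cons g t (by simp), dd_cons g' t (by simp)]
      exact ih (eqOn_dslope_congr hU h (hL t (by simp)))
        (fun u hu => hL u (by simp [hu]))

end DDdef



section DDsym

lemma dslope_dslope_comm {U : Set ℂ} (hU : IsOpen U) {g : ℂ → ℂ}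
    (hg : AnalyticOnNhd ℂ g U) {a b : ℂ} (ha : a ∈ U) (hb : b ∈ U) :
    Set.EqOn (dslope (dslope g a) b) (dslope (dslope g b) a) U := by
  rcases eq_or_ne a b with rfl | hab
  · exact fun w _ => rfl
  intro w hw
  have hF1 : AnalyticOnNhd ℂ (dslope (dslope g a) b) U :=
    analyticOnNhd_dslope hU (analyticOnNhd_dslope hU hg ha) hb
  have hF2 : AnalyticOnNhd ℂ (dslope (dslope g b) a) U :=
    analyticOnNhd_dslope hU (analyticOnNhd_dslope hU hg hb) ha
  have hpt : ∀ x ∈ U, x ≠ a → x ≠ b →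
      dslope (dslope g a) b x = dslope (dslope g b) a x := by
    intro x _ hxa hxb
    have e1 : dslope (dslope g a) b x
        = ((g x - g a)/(x - a) - (g b - g a)/(b - a))/(x - b) := by
      rw [dslope_of_ne _ hxb, slope_def_field, dslope_of_ne _ hxa,
        dslope_of_ne _ (Ne.symm hab), slope_def_field, slope_def_field]
    have e2 : dslope (dslope g b) a x
        = ((g x - g b)/(x - b) - (g a - g b)/(a - b))/(x - a) := by
      rw [dslope_of_ne _ hxa, slope_def_field, dslope_of_ne _ hxb,
        dslope_of_ne _ hab, slope_def_field, slope_def_field]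
    rw [e1, e2]
    have h1 : x - a ≠ 0 := sub_ne_zero.2 hxa
    have h2 : x - b ≠ 0 := sub_ne_zero.2 hxb
    have h3 : a - b ≠ 0 := sub_ne_zero.2 hab
    have h4 : b - a ≠ 0 := sub_ne_zero.2 (Ne.symm hab)
    field_simp
    ring
  -- density/continuity argument, valid for every w ∈ U
  set s : Set ℂ := ({a, b} : Set ℂ)ᶜ ∩ U with hs
  have hdense : Dense (({a, b} : Set ℂ)ᶜ) :=
    (Set.Finite.countable (by simp : ({a, b} : Set ℂ).Finite)).dense_compl ℂ
  have hwc : w ∈ closure s := by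
    have := hdense.open_subset_closure_inter hU
    rw [Set.inter_comm] at this
    exact this hw
  have hne : (𝓝[s] w).NeBot := mem_closure_iff_nhdsWithin_neBot.1 hwc
  have hsubU : s ⊆ U := Set.inter_subset_right
  have l1 : Filter.Tendsto (dslope (dslope g a) b) (𝓝[s] w)
      (𝓝 (dslope (dslope g a) b w)) :=
    ((hF1.continuousOn).continuousWithinAt hw).mono hsubU
  have l2 : Filter.Tendsto (dslope (dslope g b) a) (𝓝[s] w)
      (𝓝 (dslope (dslope g b) a w)) :=
    ((hF2.continuousOn).continuousWithinAt hw).mono hsubU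
  have heq : dslope (dslope g a) b =ᶠ[𝓝[s] w] dslope (dslope g b) a := by
    filter_upwards [self_mem_nhdsWithin] with x hx
    have hx1 : x ∉ ({a, b} : Set ℂ) := hx.1
    simp only [Set.mem_insert_iff, Set.mem_singleton_iff, not_or] at hx1
    exact hpt x hx.2 hx1.1 hx1.2
  exact tendsto_nhds_unique (l1.congr' heq) l2

lemma dd_swap {U : Set ℂ} (hU : IsOpen U) {g : ℂ → ℂ}
    (hg : AnalyticOnNhd ℂ g U) {z x : ℂ} (hz : z ∈ U) (hx : x ∈ U)
    {M : List ℂ} (hM : ∀ t ∈ M, t ∈ U) :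
    dd g (z :: x :: M) = dd g (x :: z :: M) := by
  match M with
  | [] =>
    show dd (dslope g z) [x] = dd (dslope g x) [z]
    simp only [dd_single]
    rcases eq_or_ne x z with rfl | hxz
    · rfl
    · rw [dslope_of_ne _ hxz, dslope_of_ne _ (Ne.symm hxz), slope_def_field,
        slope_def_field]
      rw [div_eq_div_iff (sub_ne_zero.2 hxz) (sub_ne_zero.2 (Ne.symm hxz))]
      ring
  | s :: M' =>
    rw [dd_cons g z (by simp), dd_cons g x (by simp),
      dd_cons (dslope g z) x (by simp), dd_cons (dslope g x) z (by simp)]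
    exact dd_congr hU (dslope_dslope_comm hU hg hz hx) hM


lemma dd_move {U : Set ℂ} (hU : IsOpen U) {g : ℂ → ℂ}
    (hg : AnalyticOnNhd ℂ g U) {z : ℂ} (hz : z ∈ U)
    {M : List ℂ} (hM : ∀ t ∈ M, t ∈ U) :
    dd g (z :: M) = dd g (M ++ [z]) := by
  induction M generalizing g with
  | nil => rfl
  | cons x M' ih =>
    have hx : x ∈ U := hM x (by simp)
    have hM' : ∀ t ∈ M', t ∈ U := fun t ht => hM t (by simp [ht])
    rw [dd_swap hU hg hz hx hM', dd_cons g x (by simp),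
      ih (analyticOnNhd_dslope hU hg hx) hM', List.cons_append,
      dd_cons g x (by simp)]

end DDsym

section DDInt

lemma ddInt {U : Set ℂ} (hU : IsOpen U) {g : ℂ → ℂ} (hg : AnalyticOnNhd ℂ g U)
    {c₀ : ℂ} {ρ : ℝ} (hρ : 0 < ρ) (hsub : closedBall c₀ ρ ⊆ U)
    {L : List ℂ} (hL : ∀ t ∈ L, t ∈ ball c₀ ρ) :
    (∮ w in C(c₀, ρ), g w * (Pl L w)⁻¹) = (2 * π * I) * dd g L := by
  induction L generalizing g with
  | nil =>
    have e : (fun w => g w * (Pl ([]:List ℂ) w)⁻¹) = g := funext fun w => by simp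
    rw [show (∮ w in C(c₀,ρ), g w * (Pl ([]:List ℂ) w)⁻¹) = ∮ w in C(c₀,ρ), g w from
      congrArg (fun h => circleIntegral h c₀ ρ) e, dd_nil, mul_zero]
    exact Complex.circleIntegral_eq_zero_of_differentiable_on_off_countable hρ.le
      Set.countable_empty (hg.continuousOn.mono hsub)
      (fun z hz => (hg z (hsub (ball_subset_closedBall hz.1))).differentiableAt)
  | cons t L ih =>
    have hsphereU : sphere c₀ ρ ⊆ U := fun w hw => hsub (sphere_subset_closedBall hw)
    have htU : t ∈ U := hsub (ball_subset_closedBall (hL t (by simp)))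
    have hLb : ∀ s ∈ L, s ∈ ball c₀ ρ := fun s hs => hL s (by simp [hs])
    have hne : ∀ w ∈ sphere c₀ ρ, ∀ s ∈ (t::L), w ≠ s := by
      intro w hw s hs he
      have h1 : dist s c₀ < ρ := mem_ball.1 (hL s hs)
      have h2 : dist w c₀ = ρ := mem_sphere.1 hw
      rw [he] at h2
      exact absurd h2 (ne_of_lt h1)
    have hsplit : Set.EqOn (fun w => g w * (Pl (t::L) w)⁻¹)
        (fun w => (dslope g t w * (Pl L w)⁻¹) + (g t * (Pl (t::L) w)⁻¹))
        (sphere c₀ ρ) := by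
      intro w hw
      have hwt : w ≠ t := hne w hw t (by simp)
      have hPl : Pl L w ≠ 0 := Pl_ne_zero (fun s hs => hne w hw s (by simp [hs]))
      have hwt0 : w - t ≠ 0 := sub_ne_zero.2 hwt
      simp only [Pl_cons]
      rw [dslope_of_ne _ hwt, slope_def_field]
      field_simp
      ring
    have hint1 : CircleIntegrable (fun w => dslope g t w * (Pl L w)⁻¹) c₀ ρ := by
      apply ContinuousOn.circleIntegrable hρ.le
      apply ContinuousOn.mul
      · exact ((analyticOnNhd_dslope hU hg htU).continuousOn).mono hsphereU
      · intro w hw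
        exact ((continuous_Pl L).continuousAt.inv₀
          (Pl_ne_zero (fun s hs => hne w hw s (by simp [hs])))).continuousWithinAt
    have hint2 : CircleIntegrable (fun w => g t * (Pl (t::L) w)⁻¹) c₀ ρ := by
      apply ContinuousOn.circleIntegrable hρ.le
      apply ContinuousOn.mul continuousOn_const
      intro w hw
      exact ((continuous_Pl (t::L)).continuousAt.inv₀
        (Pl_ne_zero (fun s hs => hne w hw s hs))).continuousWithinAt
    rw [circleIntegral.integral_congr hρ.le hsplit, circleIntegral_add hint1 hint2,
      circleIntegral.integral_const_mul, lemA hρ hL,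
      ih (analyticOnNhd_dslope hU hg htU) hLb]
    cases L with
    | nil => simp [dd_nil, dd_single]; ring
    | cons s L' =>
      rw [if_neg (by simp : ¬(t :: s :: L').length = 1), dd_cons g t (by simp)]
      ring

end DDInt

section MatAlg

variable {R : Type*} [Ring R] [Algebra ℂ R]

/-- evaluation of a coefficient list (little endian) at a scalar -/
def evalL : List R → ℂ → R
  | [], _ => 0
  | V :: l, w => V + w • evalL l w

/-- evaluation of a coefficient list at an element of `R` (coefficients on the left) -/
def evalM : List R → R → R
  | [], _ => 0
  | V :: l, X => V + X * evalM l X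

/-- synthetic division of a coefficient list by `(· - X)` -/
def divM : List R → R → List R
  | [], _ => []
  | [_], _ => []
  | _ :: W :: l, X => evalM (W :: l) X :: divM (W :: l) X

@[simp] lemma evalL_nil (w : ℂ) : evalL ([] : List R) w = 0 := rfl
@[simp] lemma evalL_cons (V : R) (l : List R) (w : ℂ) :
    evalL (V :: l) w = V + w • evalL l w := rfl
@[simp] lemma evalM_nil (X : R) : evalM ([] : List R) X = 0 := rfl
@[simp] lemma evalM_cons (V : R) (l : List R) (X : R) :
    evalM (V :: l) X = V + X * evalM l X := rfl

lemma divM_length (l : List R) (X : R) : (divM l X).length = l.length - 1 := by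
  induction l with
  | nil => rfl
  | cons V l ih =>
    cases l with
    | nil => rfl
    | cons W l' =>
      show (evalM (W :: l') X :: divM (W :: l') X).length = (W :: l').length
      simp only [List.length_cons] at ih ⊢
      omega

lemma evalL_divM (l : List R) (X : R) (w : ℂ) :
    evalL l w = (w • (1:R) - X) * evalL (divM l X) w + evalM l X := by
  induction l with
  | nil => simp [divM]
  | cons V l ih =>
    cases l with
    | nil => simp [divM]
    | cons W l' =>
      show evalL (V :: W :: l') w
          = (w • (1:R) - X) * evalL (evalM (W :: l') X :: divM (W :: l') X) w
            + evalM (V :: W :: l') X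
      have h1 : (w • (1:R) - X) * evalL (divM (W :: l') X) w
          = evalL (W :: l') w - evalM (W :: l') X := by
        rw [eq_sub_iff_add_eq]
        exact ih.symm
      simp only [evalL_cons, evalM_cons]
      rw [mul_add, mul_smul_comm, h1, sub_mul, smul_mul_assoc, one_mul, smul_sub]
      simp only [evalL_cons, evalM_cons, smul_add]
      module

lemma evalM_smul_one (l : List R) (t : ℂ) : evalM l (t • (1:R)) = evalL l t := by
  induction l with
  | nil => rfl
  | cons V l ih => simp only [evalM_cons, evalL_cons, ih, smul_mul_assoc, one_mul]

lemma evalL_divS (l : List R) (t w : ℂ) :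
    evalL l w = (w - t) • evalL (divM l (t • (1:R))) w + evalL l t := by
  have h := evalL_divM l (t • (1:R)) w
  rw [evalM_smul_one] at h
  rw [h, ← sub_smul, smul_mul_assoc, one_mul]

/-- the constant coefficient matrices in the partial fraction decomposition -/
def Km : List R → List ℂ → ℕ → R
  | _, [], _ => 0
  | l, t :: _, 0 => evalL l t
  | l, t :: L, i + 1 => Km (divM l (t • 1)) L i

lemma MPF (L : List ℂ) (l : List R) (hlen : l.length ≤ L.length) (w : ℂ) :
    evalL l w = ∑ i ∈ Finset.range L.length, Pl (L.take i) w • Km l L i := by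
  induction L generalizing l with
  | nil =>
    have h0 : l = [] := List.length_eq_zero_iff.1 (Nat.le_zero.1 hlen)
    subst h0; simp
  | cons t L ih =>
    have hlen' : (divM l (t • (1:R))).length ≤ L.length := by
      rw [divM_length]
      simp only [List.length_cons] at hlen
      omega
    rw [evalL_divS l t w, ih _ hlen']
    simp only [List.length_cons]
    rw [Finset.sum_range_succ']
    simp only [List.take_succ_cons, List.take_zero, Pl_nil, one_smul, Pl_cons]
    rw [Finset.smul_sum]
    congr 1
    refine Finset.sum_congr rfl fun i _ => ?_
    rw [smul_smul]
    rfl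

lemma MPFinv (L : List ℂ) (l : List R) (hlen : l.length ≤ L.length) (w : ℂ)
    (hw : ∀ t ∈ L, w ≠ t) :
    (Pl L w)⁻¹ • evalL l w
      = ∑ i ∈ Finset.range L.length, (Pl (L.drop i) w)⁻¹ • Km l L i := by
  rw [MPF L l hlen w, Finset.smul_sum]
  refine Finset.sum_congr rfl fun i _ => ?_
  rw [smul_smul]
  congr 1
  have hsplit : Pl L w = Pl (L.take i) w * Pl (L.drop i) w := by
    rw [← Pl_append, List.take_append_drop]
  have h1 : Pl (L.take i) w ≠ 0 :=
    Pl_ne_zero fun t ht => hw t (List.take_subset i L ht)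
  have h2 : Pl (L.drop i) w ≠ 0 :=
    Pl_ne_zero fun t ht => hw t (List.drop_subset i L ht)
  rw [hsplit, mul_inv]
  field_simp

end MatAlg

section MatSpecGen

variable {n : Type*} [Fintype n] [DecidableEq n]

lemma detResolvent (M : Matrix n n ℂ) (w : ℂ) :
    (w • (1 : Matrix n n ℂ) - M).det = M.charpoly.eval w := by
  have h1 : M.charpoly = (charmatrix M).det := rfl
  rw [h1, ← Polynomial.coe_evalRingHom, RingHom.map_det]
  congr 1
  ext i j
  rcases eq_or_ne i j with rfl | hij
  · simp [charmatrix_apply_eq, Matrix.one_apply_eq]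
  · simp [charmatrix_apply_ne _ _ _ hij, Matrix.one_apply_ne hij]

lemma spectrum_det (M : Matrix n n ℂ) (z : ℂ) :
    z ∈ spectrum ℂ M ↔ (z • (1 : Matrix n n ℂ) - M).det = 0 := by
  rw [spectrum.mem_iff, Algebra.algebraMap_eq_smul_one,
    Matrix.isUnit_iff_isUnit_det, isUnit_iff_ne_zero, not_not]

end MatSpecGen

section MatSpec

variable {m : ℕ}

lemma evalL_append (l₁ l₂ : List (Matrix (Fin m) (Fin m) ℂ)) (w : ℂ) :
    evalL (l₁ ++ l₂) w = evalL l₁ w + w ^ l₁.length • evalL l₂ w := by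
  induction l₁ with
  | nil => simp
  | cons V l ih =>
    simp only [List.cons_append, evalL_cons, ih, smul_add, List.length_cons]
    rw [smul_smul, ← pow_succ']
    abel

lemma evalM_append (l₁ l₂ : List (Matrix (Fin m) (Fin m) ℂ))
    (X : Matrix (Fin m) (Fin m) ℂ) :
    evalM (l₁ ++ l₂) X = evalM l₁ X + X ^ l₁.length * evalM l₂ X := by
  induction l₁ with
  | nil => simp
  | cons V l ih =>
    simp only [List.cons_append, evalM_cons, ih, mul_add, List.length_cons]
    rw [← mul_assoc, ← pow_succ']
    abel

lemma evalL_map_range (φ : ℕ → Matrix (Fin m) (Fin m) ℂ) (n : ℕ) (w : ℂ) :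
    evalL ((List.range n).map φ) w = ∑ k ∈ Finset.range n, w ^ k • φ k := by
  induction n with
  | zero => simp
  | succ n ih =>
    rw [List.range_succ, List.map_append, evalL_append, ih, Finset.sum_range_succ]
    simp

lemma evalM_map_range (φ : ℕ → Matrix (Fin m) (Fin m) ℂ) (n : ℕ)
    (X : Matrix (Fin m) (Fin m) ℂ) :
    evalM ((List.range n).map φ) X = ∑ k ∈ Finset.range n, X ^ k * φ k := by
  induction n with
  | zero => simp
  | succ n ih =>
    rw [List.range_succ, List.map_append, evalM_append, ih, Finset.sum_range_succ]
    simp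

/-- the coefficient list of the characteristic polynomial, as scalar matrices -/
def lchar (M : Matrix (Fin m) (Fin m) ℂ) : List (Matrix (Fin m) (Fin m) ℂ) :=
  (List.range (m + 1)).map fun k => M.charpoly.coeff k • 1

/-- coefficient list of the "adjugate-like" matrix polynomial -/
def resL (M : Matrix (Fin m) (Fin m) ℂ) : List (Matrix (Fin m) (Fin m) ℂ) :=
  divM (lchar M) M

lemma evalL_lchar (M : Matrix (Fin m) (Fin m) ℂ) (w : ℂ) :
    evalL (lchar M) w = M.charpoly.eval w • 1 := by
  rw [lchar, evalL_map_range]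
  have h1 : M.charpoly.eval w
      = ∑ k ∈ Finset.range (m + 1), M.charpoly.coeff k * w ^ k := by
    have h2 : M.charpoly.natDegree = m := by
      rw [Matrix.charpoly_natDegree_eq_dim, Fintype.card_fin]
    exact Polynomial.eval_eq_sum_range' (by omega) w
  rw [h1, Finset.sum_smul]
  refine Finset.sum_congr rfl fun k _ => ?_
  rw [smul_smul, mul_comm]

lemma evalM_lchar (M : Matrix (Fin m) (Fin m) ℂ) : evalM (lchar M) M = 0 := by
  rw [lchar, evalM_map_range]
  have h1 : ∀ k, M ^ k * (M.charpoly.coeff k • (1 : Matrix (Fin m) (Fin m) ℂ))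
      = M.charpoly.coeff k • M ^ k := fun k => by
    rw [mul_smul_comm, mul_one]
  rw [Finset.sum_congr rfl fun k _ => h1 k]
  have h2 : M.charpoly.natDegree = m := by
    rw [Matrix.charpoly_natDegree_eq_dim, Fintype.card_fin]
  have h3 := Polynomial.aeval_eq_sum_range' (p := M.charpoly) (n := m + 1) (by omega) M
  rw [← h3, Matrix.aeval_self_charpoly]

lemma resolvent_eq (M : Matrix (Fin m) (Fin m) ℂ) (w : ℂ)
    (h : M.charpoly.eval w ≠ 0) :
    (w • (1 : Matrix (Fin m) (Fin m) ℂ) - M)⁻¹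
      = (M.charpoly.eval w)⁻¹ • evalL (resL M) w := by
  have key : (w • (1 : Matrix (Fin m) (Fin m) ℂ) - M) * evalL (resL M) w
      = M.charpoly.eval w • 1 := by
    have h0 := evalL_divM (lchar M) M w
    rw [evalM_lchar, add_zero, evalL_lchar] at h0
    exact h0.symm
  apply Matrix.inv_eq_right_inv
  rw [mul_smul_comm, key, smul_smul, inv_mul_cancel₀ h, one_smul]

lemma resolvent_decomp (M : Matrix (Fin m) (Fin m) ℂ) :
    ∃ (LM : List ℂ) (K : ℕ → Matrix (Fin m) (Fin m) ℂ),
      LM.length = m ∧ (∀ t ∈ LM, t ∈ spectrum ℂ M) ∧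
      ∀ w : ℂ, (∀ t ∈ LM, w ≠ t) →
        (w • (1 : Matrix (Fin m) (Fin m) ℂ) - M)⁻¹
          = ∑ i ∈ Finset.range m, (Pl (LM.drop i) w)⁻¹ • K i := by
  classical
  set χ := M.charpoly with hχ
  have hmon : χ.Monic := M.charpoly_monic
  have hsplits : Polynomial.Splits χ := IsAlgClosed.splits χ
  set LM := χ.roots.toList with hLM
  have hdeg : χ.natDegree = m := by
    rw [hχ, Matrix.charpoly_natDegree_eq_dim, Fintype.card_fin]
  have hlen : LM.length = m := by
    rw [hLM, Multiset.length_toList]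
    have := hsplits.natDegree_eq_card_roots
    omega
  have hPl : ∀ w, Pl LM w = χ.eval w := by
    intro w
    conv_rhs => rw [hsplits.eq_prod_roots_of_monic hmon]
    rw [Polynomial.eval_multiset_prod, Multiset.map_map]
    have e1 : ((fun a => Polynomial.eval w a) ∘ fun a => Polynomial.X - Polynomial.C a)
        = fun a => w - a := by
      funext a; simp
    rw [e1, Pl]
    calc (List.map (fun t => w - t) LM).prod
        = ((List.map (fun t => w - t) LM : Multiset ℂ)).prod := by
          rw [Multiset.prod_coe]
      _ = ((LM : Multiset ℂ).map fun t => w - t).prod := by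
          rw [Multiset.map_coe]
      _ = (χ.roots.map fun t => w - t).prod := by
          rw [hLM, Multiset.coe_toList]
  have hmem : ∀ t ∈ LM, t ∈ spectrum ℂ M := by
    intro t ht
    rw [spectrum_det, detResolvent]
    have h1 : t ∈ χ.roots := Multiset.mem_toList.1 ht
    exact (Polynomial.mem_roots hmon.ne_zero).1 h1
  refine ⟨LM, Km (resL M) LM, hlen, hmem, ?_⟩
  intro w hw
  have hev : χ.eval w ≠ 0 := by rw [← hPl]; exact Pl_ne_zero hw
  rw [resolvent_eq M w hev, ← hPl]
  have hlen2 : (resL M).length ≤ LM.length := by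
    rw [resL, divM_length, lchar, List.length_map, List.length_range, hlen]
    omega
  have := MPFinv LM (resL M) hlen2 w hw
  rw [this, hlen]

end MatSpec

lemma clm_circleIntegral {E F : Type*} [NormedAddCommGroup E] [NormedSpace ℂ E]
    [CompleteSpace E] [NormedAddCommGroup F] [NormedSpace ℂ F] [CompleteSpace F] (L : E →L[ℂ] F)
    {f : ℂ → E} {c : ℂ} {R : ℝ} (hf : CircleIntegrable f c R) :
    L (∮ z in C(c, R), f z) = ∮ z in C(c, R), L (f z) := by
  simp only [circleIntegral]
  rw [← L.intervalIntegral_comp_comm hf.out]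
  congr 1
  funext θ
  rw [L.map_smul]

lemma dd_dslope_eval {U : Set ℂ} (hU : IsOpen U) {f : ℂ → ℂ}
    (hf : AnalyticOnNhd ℂ f U) {z : ℂ} (hz : z ∈ U) {M : List ℂ}
    (hM : ∀ t ∈ M, t ∈ U) (hMne : M ≠ []) :
    dd (dslope f z) M = ddIter f M z := by
  rw [← dd_cons f z hMne, dd_move hU hf hz hM, dd_ddIter f M (by simp), dd_single]

lemma aux_contour {E : Type*} [NormedAddCommGroup E] [NormedSpace ℂ E] [CompleteSpace E]
    {U : Set ℂ} (hU : IsOpen U) {c₀ : ℂ} {ρ : ℝ} (hρ : 0 < ρ)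
    (hsub : Metric.closedBall c₀ ρ ⊆ U)
    {ι : Type*} (s : Finset ι) (g : ι → ℂ → ℂ) (Lf : ι → List ℂ) (C : ι → E)
    (hg : ∀ i ∈ s, AnalyticOnNhd ℂ (g i) U)
    (hLf : ∀ i ∈ s, ∀ t ∈ Lf i, t ∈ ball c₀ ρ) :
    (∮ w in C(c₀, ρ), ∑ i ∈ s, (g i w * (Pl (Lf i) w)⁻¹) • C i)
      = ∑ i ∈ s, ((2 * π * I) * dd (g i) (Lf i)) • C i := by
  have hsph : sphere c₀ ρ ⊆ U := fun w hw => hsub (sphere_subset_closedBall hw)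
  have hint : ∀ i ∈ s, CircleIntegrable (fun w => (g i w * (Pl (Lf i) w)⁻¹) • C i) c₀ ρ := by
    intro i hi
    refine ContinuousOn.circleIntegrable hρ.le ?_
    refine ContinuousOn.smul ?_ continuousOn_const
    refine ContinuousOn.mul (((hg i hi).continuousOn).mono hsph) ?_
    intro w hw
    refine ((continuous_Pl (Lf i)).continuousAt.inv₀ (Pl_ne_zero ?_)).continuousWithinAt
    intro t ht he
    have h1 : dist t c₀ < ρ := mem_ball.1 (hLf i hi t ht)
    have h2 : dist w c₀ = ρ := mem_sphere.1 hw
    rw [he] at h2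
    exact absurd h2 (ne_of_lt h1)
  rw [circleIntegral_finsetSum s hint]
  refine Finset.sum_congr rfl fun i hi => ?_
  rw [circleIntegral.integral_smul_const, ddInt hU (hg i hi) hρ hsub (hLf i hi)]

lemma sum_fromBlocks {ι l m n o : Type*} [Fintype l] [Fintype m] [Fintype n] [Fintype o]
    (s : Finset ι) (A : ι → Matrix n l ℂ) (B : ι → Matrix n m ℂ)
    (C : ι → Matrix o l ℂ) (D : ι → Matrix o m ℂ) :
    ∑ i ∈ s, Matrix.fromBlocks (A i) (B i) (C i) (D i)
      = Matrix.fromBlocks (∑ i ∈ s, A i) (∑ i ∈ s, B i) (∑ i ∈ s, C i) (∑ i ∈ s, D i) := by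
  classical
  induction s using Finset.induction with
  | empty =>
    simp only [Finset.sum_empty]
    ext (i | i) (j | j) <;> simp [Matrix.fromBlocks]
  | insert a s hx ih =>
    simp only [Finset.sum_insert hx, ih, Matrix.fromBlocks_add]

end DDaux

open DDaux in
theorem toBlocks₁₂_contour_eq_dividedDifference
    (ν μ : ℕ) (A : Matrix (Fin ν) (Fin ν) ℂ) (B : Matrix (Fin μ) (Fin μ) ℂ)
    (H : Matrix (Fin ν) (Fin μ) ℂ)
    (T : Matrix (Fin ν ⊕ Fin μ) (Fin ν ⊕ Fin μ) ℂ)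
    (hT : T = Matrix.fromBlocks A H 0 B)
    (c₁ c₂ c : ℂ) (r₁ r₂ r : ℝ) (hr₁ : 0 < r₁) (hr₂ : 0 < r₂) (hr : 0 < r)
    (hA : spectrum ℂ A ⊆ Metric.ball c₁ r₁)
    (hB : spectrum ℂ B ⊆ Metric.ball c₂ r₂)
    (hTs : spectrum ℂ T ⊆ Metric.ball c r)
    (U : Set ℂ) (hU : IsOpen U)
    (hUr : Metric.closedBall c r ⊆ U)
    (hU1 : Metric.closedBall c₁ r₁ ⊆ U) (hU2 : Metric.closedBall c₂ r₂ ⊆ U)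
    (f : ℂ → ℂ) (hf : AnalyticOnNhd ℂ f U)
    (f1 : ℂ × ℂ → ℂ)
    (hf1 : ∀ p : ℂ × ℂ,
      f1 p = if p.1 = p.2 then deriv f p.1 else (f p.1 - f p.2) / (p.1 - p.2))
    (F : Matrix (Fin ν ⊕ Fin μ) (Fin ν ⊕ Fin μ) ℂ)
    (hF : F = ((1 / (2 * π * I)) : ℂ) •
      ∮ w in C(c, r), f w • (w • (1 : Matrix (Fin ν ⊕ Fin μ) (Fin ν ⊕ Fin μ) ℂ) - T)⁻¹) :
    F.toBlocks₁₂ = ((1 / (2 * π * I)) ^ 2 : ℂ) •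
      (∮ z in C(c₂, r₂), ∮ w in C(c₁, r₁),
        f1 (w, z) • ((w • (1 : Matrix (Fin ν) (Fin ν) ℂ) - A)⁻¹ * H *
          (z • (1 : Matrix (Fin μ) (Fin μ) ℂ) - B)⁻¹)) := by
  classical
  rcases Nat.eq_zero_or_pos ν with hν0 | hν
  · subst hν0
    ext i j
    exact i.elim0
  rcases Nat.eq_zero_or_pos μ with hμ0 | hμ
  · subst hμ0
    ext i j
    exact j.elim0
  have h2πi : (2 * (π:ℂ) * I) ≠ 0 := by
    simp [Real.pi_ne_zero, I_ne_zero]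
  obtain ⟨LA, KA, hLAlen, hLAspec, hKA⟩ := resolvent_decomp A
  obtain ⟨LB, KB, hLBlen, hLBspec, hKB⟩ := resolvent_decomp B
  -- block form of the resolvent matrix
  have hblockT : ∀ z : ℂ, z • (1 : Matrix (Fin ν ⊕ Fin μ) (Fin ν ⊕ Fin μ) ℂ) - T
      = Matrix.fromBlocks (z • 1 - A) (-H) 0 (z • 1 - B) := by
    intro z
    rw [hT, ← Matrix.fromBlocks_one, Matrix.fromBlocks_smul, sub_eq_add_neg,
      Matrix.fromBlocks_neg, Matrix.fromBlocks_add]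
    simp [sub_eq_add_neg]
  have hdetT : ∀ z : ℂ, (z • (1 : Matrix (Fin ν ⊕ Fin μ) (Fin ν ⊕ Fin μ) ℂ) - T).det
      = (z • (1 : Matrix (Fin ν) (Fin ν) ℂ) - A).det
        * (z • (1 : Matrix (Fin μ) (Fin μ) ℂ) - B).det := by
    intro z
    rw [hblockT z, Matrix.det_fromBlocks_zero₂₁]
  have hspecA : spectrum ℂ A ⊆ spectrum ℂ T := by
    intro z hz
    rw [spectrum_det] at hz ⊢
    rw [hdetT z, hz, zero_mul]
  have hspecB : spectrum ℂ B ⊆ spectrum ℂ T := by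
    intro z hz
    rw [spectrum_det] at hz ⊢
    rw [hdetT z, hz, mul_zero]
  -- location of the eigenvalue lists
  have hLA1 : ∀ t ∈ LA, t ∈ Metric.ball c₁ r₁ := fun t ht => hA (hLAspec t ht)
  have hLAr : ∀ t ∈ LA, t ∈ Metric.ball c r := fun t ht => hTs (hspecA (hLAspec t ht))
  have hLB2 : ∀ t ∈ LB, t ∈ Metric.ball c₂ r₂ := fun t ht => hB (hLBspec t ht)
  have hLBr : ∀ t ∈ LB, t ∈ Metric.ball c r := fun t ht => hTs (hspecB (hLBspec t ht))
  have hLAU : ∀ t ∈ LA, t ∈ U := fun t ht =>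
    hU1 (Metric.ball_subset_closedBall (hLA1 t ht))
  have hLBU : ∀ t ∈ LB, t ∈ U := fun t ht =>
    hU2 (Metric.ball_subset_closedBall (hLB2 t ht))
  have sphne : ∀ (c' : ℂ) (r' : ℝ) (L : List ℂ), (∀ t ∈ L, t ∈ Metric.ball c' r') →
      ∀ w ∈ Metric.sphere c' r', ∀ t ∈ L, w ≠ t := by
    intro c' r' L hL w hw t ht he
    have h1 : dist t c' < r' := Metric.mem_ball.1 (hL t ht)
    have h2 : dist w c' = r' := Metric.mem_sphere.1 hw
    rw [he] at h2
    exact absurd h2 (ne_of_lt h1)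
  have hsphA := sphne c₁ r₁ LA hLA1
  have hsphAr := sphne c r LA hLAr
  have hsphBr := sphne c r LB hLBr
  have hsphB2 := sphne c₂ r₂ LB hLB2
  have hsph2U : Metric.sphere c₂ r₂ ⊆ U := fun w hw =>
    hU2 (Metric.sphere_subset_closedBall hw)
  -- f1 is dslope
  have hf1d : ∀ z w : ℂ, f1 (w, z) = dslope f z w := by
    intro z w
    rcases eq_or_ne w z with rfl | hwz
    · rw [hf1]; simp
    · rw [hf1]
      simp only [if_neg hwz]
      rw [dslope_of_ne _ hwz, slope_def_field]
  -- nonemptiness and membership of drop lists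
  have hdropAne : ∀ i ∈ Finset.range ν, LA.drop i ≠ [] := by
    intro i hi h
    have h1 : (LA.drop i).length = ν - i := by rw [List.length_drop, hLAlen]
    rw [h] at h1
    simp only [List.length_nil] at h1
    have := Finset.mem_range.1 hi
    omega
  have hdropBne : ∀ j ∈ Finset.range μ, LB.drop j ≠ [] := by
    intro j hj h
    have h1 : (LB.drop j).length = μ - j := by rw [List.length_drop, hLBlen]
    rw [h] at h1
    simp only [List.length_nil] at h1
    have := Finset.mem_range.1 hj
    omega
  set S : Finset (ℕ × ℕ) := Finset.range ν ×ˢ Finset.range μ with hS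
  set base : ℕ × ℕ → Matrix (Fin ν) (Fin μ) ℂ := fun p => KA p.1 * H * KB p.2 with hbase
  set Lp : ℕ × ℕ → List ℂ := fun p => LA.drop p.1 ++ LB.drop p.2 with hLp
  -- products of the decompositions
  have hprod : ∀ (a b : ℕ → ℂ),
      (∑ i ∈ Finset.range ν, a i • KA i) * H * (∑ j ∈ Finset.range μ, b j • KB j)
        = ∑ p ∈ S, (a p.1 * b p.2) • base p := by
    intro a b
    rw [hS, Finset.sum_product]
    rw [Matrix.sum_mul, Matrix.sum_mul]
    refine Finset.sum_congr rfl fun i _ => ?_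
    rw [Matrix.mul_sum]
    refine Finset.sum_congr rfl fun j _ => ?_
    rw [Matrix.smul_mul, Matrix.smul_mul, Matrix.mul_smul, smul_smul]
  -- the block inverse formula on the sphere
  have hblockinv : ∀ w ∈ Metric.sphere c r,
      (w • (1 : Matrix (Fin ν ⊕ Fin μ) (Fin ν ⊕ Fin μ) ℂ) - T)⁻¹
        = Matrix.fromBlocks ((w • 1 - A)⁻¹)
            ((w • 1 - A)⁻¹ * H * (w • 1 - B)⁻¹) 0 ((w • 1 - B)⁻¹) := by
    intro w hw
    have hdet0 : (w • (1 : Matrix (Fin ν ⊕ Fin μ) (Fin ν ⊕ Fin μ) ℂ) - T).det ≠ 0 := by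
      intro h0
      have h1 : w ∈ spectrum ℂ T := (spectrum_det T w).2 h0
      have h2 := hTs h1
      have h3 : dist w c = r := Metric.mem_sphere.1 hw
      exact absurd h3 (ne_of_lt (Metric.mem_ball.1 h2))
    rw [hdetT w] at hdet0
    have hdA : IsUnit (w • (1 : Matrix (Fin ν) (Fin ν) ℂ) - A).det :=
      isUnit_iff_ne_zero.2 (left_ne_zero_of_mul hdet0)
    have hdB : IsUnit (w • (1 : Matrix (Fin μ) (Fin μ) ℂ) - B).det :=
      isUnit_iff_ne_zero.2 (right_ne_zero_of_mul hdet0)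
    letI iA := (w • (1 : Matrix (Fin ν) (Fin ν) ℂ) - A).invertibleOfIsUnitDet hdA
    letI iB := (w • (1 : Matrix (Fin μ) (Fin μ) ℂ) - B).invertibleOfIsUnitDet hdB
    letI iT := Matrix.fromBlocksZero₂₁Invertible
      (w • (1 : Matrix (Fin ν) (Fin ν) ℂ) - A) (-H)
      (w • (1 : Matrix (Fin μ) (Fin μ) ℂ) - B)
    rw [hblockT w, ← Matrix.invOf_eq_nonsing_inv, Matrix.invOf_fromBlocks_zero₂₁_eq]
    simp only [Matrix.invOf_eq_nonsing_inv, Matrix.mul_neg, Matrix.neg_mul, neg_neg]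
  -- membership for the combined lists
  have hLpBall : ∀ p ∈ S, ∀ t ∈ Lp p, t ∈ Metric.ball c r := by
    intro p _ t ht
    rcases List.mem_append.1 ht with h | h
    · exact hLAr t (List.drop_subset _ _ h)
    · exact hLBr t (List.drop_subset _ _ h)
  -- LHS --------------------------------------------------------------------
  let T12 : Matrix (Fin ν ⊕ Fin μ) (Fin ν ⊕ Fin μ) ℂ →ₗ[ℂ] Matrix (Fin ν) (Fin μ) ℂ :=
    { toFun := Matrix.toBlocks₁₂
      map_add' := fun x y => rfl
      map_smul' := fun m x => rfl }
  let T12c : Matrix (Fin ν ⊕ Fin μ) (Fin ν ⊕ Fin μ) ℂ →L[ℂ] Matrix (Fin ν) (Fin μ) ℂ :=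
    LinearMap.toContinuousLinearMap T12
  have hT12c : ∀ M : Matrix (Fin ν ⊕ Fin μ) (Fin ν ⊕ Fin μ) ℂ,
      T12c M = M.toBlocks₁₂ := fun M => rfl
  -- the replacement integrand over the big circle
  set Φ : ℂ → Matrix (Fin ν ⊕ Fin μ) (Fin ν ⊕ Fin μ) ℂ := fun w =>
    f w • ((∑ i ∈ Finset.range ν, (Pl (LA.drop i) w)⁻¹ •
        Matrix.fromBlocks (KA i) 0 0 0)
      + (∑ p ∈ S, (Pl (Lp p) w)⁻¹ • Matrix.fromBlocks 0 (base p) 0 0)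
      + (∑ j ∈ Finset.range μ, (Pl (LB.drop j) w)⁻¹ •
        Matrix.fromBlocks 0 0 0 (KB j))) with hΦ
  have hΦeq : Set.EqOn (fun w => f w •
      (w • (1 : Matrix (Fin ν ⊕ Fin μ) (Fin ν ⊕ Fin μ) ℂ) - T)⁻¹) Φ
      (Metric.sphere c r) := by
    intro w hw
    simp only [hΦ]
    congr 1
    rw [hblockinv w hw, hKA w (hsphAr w hw), hKB w (hsphBr w hw),
      hprod (fun i => (Pl (LA.drop i) w)⁻¹) (fun j => (Pl (LB.drop j) w)⁻¹)]
    have e1 : ∀ (i : ℕ), (Pl (LA.drop i) w)⁻¹ •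
        Matrix.fromBlocks (KA i) (0 : Matrix (Fin ν) (Fin μ) ℂ)
          (0 : Matrix (Fin μ) (Fin ν) ℂ) (0 : Matrix (Fin μ) (Fin μ) ℂ)
        = Matrix.fromBlocks ((Pl (LA.drop i) w)⁻¹ • KA i) 0 0 0 := by
      intro i
      rw [Matrix.fromBlocks_smul]
      simp
    have e2 : ∀ (p : ℕ × ℕ), (Pl (Lp p) w)⁻¹ •
        Matrix.fromBlocks (0 : Matrix (Fin ν) (Fin ν) ℂ) (base p)
          (0 : Matrix (Fin μ) (Fin ν) ℂ) (0 : Matrix (Fin μ) (Fin μ) ℂ)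
        = Matrix.fromBlocks 0 ((Pl (Lp p) w)⁻¹ • base p) 0 0 := by
      intro p
      rw [Matrix.fromBlocks_smul]
      simp
    have e3 : ∀ (j : ℕ), (Pl (LB.drop j) w)⁻¹ •
        Matrix.fromBlocks (0 : Matrix (Fin ν) (Fin ν) ℂ)
          (0 : Matrix (Fin ν) (Fin μ) ℂ) (0 : Matrix (Fin μ) (Fin ν) ℂ) (KB j)
        = Matrix.fromBlocks 0 0 0 ((Pl (LB.drop j) w)⁻¹ • KB j) := by
      intro j
      rw [Matrix.fromBlocks_smul]
      simp
    simp only [Finset.sum_congr rfl fun i _ => e1 i,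
      Finset.sum_congr rfl fun p _ => e2 p, Finset.sum_congr rfl fun j _ => e3 j]
    rw [sum_fromBlocks, sum_fromBlocks, sum_fromBlocks, Matrix.fromBlocks_add,
      Matrix.fromBlocks_add]
    have hPl12 : ∀ p : ℕ × ℕ, ((Pl (LA.drop p.1) w)⁻¹ * (Pl (LB.drop p.2) w)⁻¹)
        = (Pl (Lp p) w)⁻¹ := by
      intro p
      rw [hLp]
      simp only
      rw [Pl_append, mul_inv]
    simp only [Finset.sum_congr rfl fun (p : ℕ × ℕ) (_ : p ∈ S) =>
      congrArg (· • base p) (hPl12 p)]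
    simp [Finset.sum_const, add_comm]
  have hΦint : CircleIntegrable Φ c r := by
    apply ContinuousOn.circleIntegrable hr.le
    rw [hΦ]
    apply ContinuousOn.fun_smul
    · exact hf.continuousOn.mono fun w hw => hUr (Metric.sphere_subset_closedBall hw)
    · have hc : ∀ (L : List ℂ), (∀ t ∈ L, t ∈ Metric.ball c r) →
          ContinuousOn (fun w => (Pl L w)⁻¹) (Metric.sphere c r) := by
        intro L hL w hw
        exact ((continuous_Pl L).continuousAt.inv₀
          (Pl_ne_zero (sphne c r L hL w hw))).continuousWithinAt
      refine ContinuousOn.add (ContinuousOn.add ?_ ?_) ?_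
      · refine continuousOn_finset_sum _ fun i hi => ?_
        exact (hc _ fun t ht => hLAr t (List.drop_subset _ _ ht)).smul continuousOn_const
      · refine continuousOn_finset_sum _ fun p hp => ?_
        exact (hc _ (hLpBall p hp)).smul continuousOn_const
      · refine continuousOn_finset_sum _ fun j hj => ?_
        exact (hc _ fun t ht => hLBr t (List.drop_subset _ _ ht)).smul continuousOn_const
  have hT12Φ : ∀ w : ℂ, T12c (Φ w)
      = ∑ p ∈ S, (f w * (Pl (Lp p) w)⁻¹) • base p := by
    intro w
    simp only [hΦ]
    rw [_root_.map_smul, map_add, map_add, map_sum, map_sum, map_sum]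
    have z1 : ∀ i ∈ Finset.range ν, T12c ((Pl (LA.drop i) w)⁻¹ •
        Matrix.fromBlocks (KA i) 0 0 0) = 0 := by
      intro i _
      rw [_root_.map_smul, hT12c, Matrix.toBlocks_fromBlocks₁₂, smul_zero]
    have z2 : ∀ p ∈ S, T12c ((Pl (Lp p) w)⁻¹ • Matrix.fromBlocks 0 (base p) 0 0)
        = (Pl (Lp p) w)⁻¹ • base p := by
      intro p _
      rw [_root_.map_smul, hT12c, Matrix.toBlocks_fromBlocks₁₂]
    have z3 : ∀ j ∈ Finset.range μ, T12c ((Pl (LB.drop j) w)⁻¹ •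
        Matrix.fromBlocks 0 0 0 (KB j)) = 0 := by
      intro j _
      rw [_root_.map_smul, hT12c, Matrix.toBlocks_fromBlocks₁₂, smul_zero]
    rw [Finset.sum_congr rfl z1, Finset.sum_congr rfl z2, Finset.sum_congr rfl z3]
    rw [Finset.sum_const, Finset.sum_const, smul_zero, smul_zero, zero_add, add_zero,
      Finset.smul_sum]
    refine Finset.sum_congr rfl fun p _ => ?_
    rw [smul_smul]
  have hLHS : F.toBlocks₁₂ = ∑ p ∈ S, dd f (Lp p) • base p := by
    have h1 : F.toBlocks₁₂ = ((1 / (2 * π * I)) : ℂ) •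
        (∮ w in C(c, r), f w •
          (w • (1 : Matrix (Fin ν ⊕ Fin μ) (Fin ν ⊕ Fin μ) ℂ) - T)⁻¹).toBlocks₁₂ := by
      rw [hF]; rfl
    rw [h1, circleIntegral.integral_congr hr.le hΦeq, ← hT12c]
    erw [clm_circleIntegral T12c hΦint]
    have h2 : (∮ w in C(c, r), T12c (Φ w))
        = ∮ w in C(c, r), ∑ p ∈ S, (f w * (Pl (Lp p) w)⁻¹) • base p := by
      apply circleIntegral.integral_congr hr.le
      intro w _
      exact hT12Φ w
    erw [h2]
    rw [aux_contour hU hr hUr S (fun _ => f) Lp base (fun _ _ => hf) hLpBall,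
      Finset.smul_sum]
    refine Finset.sum_congr rfl fun p _ => ?_
    rw [smul_smul]
    congr 1
    field_simp
  -- RHS --------------------------------------------------------------------
  have hinner : ∀ z ∈ Metric.sphere c₂ r₂,
      (∮ w in C(c₁, r₁), f1 (w, z) • ((w • (1 : Matrix (Fin ν) (Fin ν) ℂ) - A)⁻¹ * H *
          (z • (1 : Matrix (Fin μ) (Fin μ) ℂ) - B)⁻¹))
        = ∑ i ∈ Finset.range ν, ((2 * π * I) * ddIter f (LA.drop i) z) •
            (KA i * H * (z • (1 : Matrix (Fin μ) (Fin μ) ℂ) - B)⁻¹) := by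
    intro z hz
    have hzU : z ∈ U := hsph2U hz
    have e1 : Set.EqOn (fun w => f1 (w, z) •
        ((w • (1 : Matrix (Fin ν) (Fin ν) ℂ) - A)⁻¹ * H *
          (z • (1 : Matrix (Fin μ) (Fin μ) ℂ) - B)⁻¹))
        (fun w => ∑ i ∈ Finset.range ν, (dslope f z w * (Pl (LA.drop i) w)⁻¹) •
          (KA i * H * (z • (1 : Matrix (Fin μ) (Fin μ) ℂ) - B)⁻¹))
        (Metric.sphere c₁ r₁) := by
      intro w hw
      simp only
      rw [hf1d, hKA w (hsphA w hw), Matrix.sum_mul, Matrix.sum_mul, Finset.smul_sum]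
      refine Finset.sum_congr rfl fun i _ => ?_
      rw [Matrix.smul_mul, Matrix.smul_mul, smul_smul, mul_comm (dslope f z w)]
    rw [circleIntegral.integral_congr hr₁.le e1,
      aux_contour hU hr₁ hU1 (Finset.range ν) (fun _ => dslope f z)
        (fun i => LA.drop i) (fun i => KA i * H * (z • 1 - B)⁻¹)
        (fun _ _ => analyticOnNhd_dslope hU hf hzU)
        (fun i _ t ht => hLA1 t (List.drop_subset _ _ ht))]
    refine Finset.sum_congr rfl fun i hi => ?_
    rw [dd_dslope_eval hU hf hzU (fun t ht => hLAU t (List.drop_subset _ _ ht))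
      (hdropAne i hi)]
  have houter : Set.EqOn (fun z => (∮ w in C(c₁, r₁), f1 (w, z) •
      ((w • (1 : Matrix (Fin ν) (Fin ν) ℂ) - A)⁻¹ * H *
        (z • (1 : Matrix (Fin μ) (Fin μ) ℂ) - B)⁻¹)))
      (fun z => ∑ p ∈ S, (ddIter f (LA.drop p.1) z * (Pl (LB.drop p.2) z)⁻¹) •
        ((2 * π * I) • base p)) (Metric.sphere c₂ r₂) := by
    intro z hz
    simp only
    rw [hinner z hz, hKB z (hsphB2 z hz), hS, Finset.sum_product]
    refine Finset.sum_congr rfl fun i _ => ?_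
    rw [Matrix.mul_sum, Finset.smul_sum]
    refine Finset.sum_congr rfl fun j _ => ?_
    rw [Matrix.mul_smul, smul_smul, smul_smul]
    congr 1
    ring
  rw [hLHS, circleIntegral.integral_congr hr₂.le houter,
    aux_contour hU hr₂ hU2 S (fun p => ddIter f (LA.drop p.1))
      (fun p => LB.drop p.2) (fun p => (2 * π * I) • base p)
      (fun p _ => analyticOnNhd_ddIter hU hf
        (fun t ht => hLAU t (List.drop_subset _ _ ht)))
      (fun p _ t ht => hLB2 t (List.drop_subset _ _ ht)),
    Finset.smul_sum]
  refine Finset.sum_congr rfl fun p hp => ?_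
  rw [← dd_ddIter f (LA.drop p.1) (hdropBne p.2 (Finset.mem_product.1 hp).2)]
  rw [smul_smul, smul_smul]
  congr 1
  have : dd f (LA.drop p.1 ++ LB.drop p.2) = dd f (Lp p) := rfl
  rw [this]
  field_simp
end
end

section
/- Let T be an N×N upper triangular complex matrix (T i j = 0 for i > j) whose diagonal entries are pairwise distinct (T i i ≠ T j j for i ≠ j), and let F = exp T be its matrix exponential. Then F is upper triangular, F i i = exp(T i i) for every i, and for all indices i < j one has F i j = ( T i j · (F j j − F i i) + ∑_{k, i < k < j} (T i k · F k j − F i k · T k j) ) / (T j j − T i i). -/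
/-!
Upper triangularity is preserved by products and by limits, so `exp T` is upper triangular and its
diagonal is computed entrywise from the exponential series. Since `T` commutes with `F = exp T`,
entry `(i, j)` of `T * F = F * T` involves only indices `i ≤ k ≤ j`; the two terms carrying `F i j`
have coefficient `T j j - T i i`, which is nonzero, so the identity can be solved for `F i j`.
-/

open Matrix Finset

attribute [local instance] Matrix.linftyOpNormedAddCommGroup Matrix.linftyOpNormedRing
  Matrix.linftyOpNormedAlgebra

namespace Matrix.IsUpperTriangular

variable {m R : Type*} [Fintype m] [LinearOrder m]

section Semiring

variable [Semiring R] {A B : Matrix m m R}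

theorem mul_apply_eq_sum_Icc [LocallyFiniteOrder m] (hA : A.IsUpperTriangular)
    (hB : B.IsUpperTriangular) (i j : m) :
    (A * B) i j = ∑ k ∈ Icc i j, A i k * B k j := by
  rw [mul_apply]
  refine (sum_subset (subset_univ _) fun k _ hk => ?_).symm
  rcases not_and_or.1 (mem_Icc.not.1 hk) with h | h
  · rw [hA (not_le.1 h), zero_mul]
  · rw [hB (not_le.1 h), mul_zero]

theorem mul_apply_self (hA : A.IsUpperTriangular) (hB : B.IsUpperTriangular) (i : m) :
    (A * B) i i = A i i * B i i := by
  rw [mul_apply]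
  refine sum_eq_single i (fun k _ hki => ?_) (absurd (mem_univ i))
  rcases hki.lt_or_gt with h | h
  · rw [hA h, zero_mul]
  · rw [hB h, mul_zero]

theorem pow_apply_self (hA : A.IsUpperTriangular) (n : ℕ) (i : m) :
    (A ^ n) i i = A i i ^ n := by
  induction n with
  | zero => simp
  | succ n ih => rw [pow_succ, mul_apply_self (hA.pow n) hA, ih, pow_succ]

theorem mul_apply_of_lt [LocallyFiniteOrder m] (hA : A.IsUpperTriangular)
    (hB : B.IsUpperTriangular) {i j : m} (hij : i < j) :
    (A * B) i j = A i i * B i j + ∑ k ∈ Ioo i j, A i k * B k j + A i j * B j j := by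
  rw [mul_apply_eq_sum_Icc hA hB, ← add_sum_Ioc_eq_sum_Icc hij.le,
    ← sum_Ioo_add_eq_sum_Ioc hij, add_assoc]

end Semiring

theorem exp_apply_self {𝕂 : Type*} [RCLike 𝕂] {A : Matrix m m 𝕂} (hA : A.IsUpperTriangular)
    (i : m) : NormedSpace.exp A i i = NormedSpace.exp (A i i) := by
  have hsum := (Pi.hasSum.1 (NormedSpace.exp_series_hasSum_exp' (𝕂 := 𝕂) A).matrix_diag) i
  simp only [diag_apply, smul_apply, hA.pow_apply_self] at hsum
  exact hsum.unique (NormedSpace.exp_series_hasSum_exp' (A i i))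

theorem parlett_recurrence [LocallyFiniteOrder m] {K : Type*} [Field K] {T F : Matrix m m K}
    (hT : T.IsUpperTriangular) (hF : F.IsUpperTriangular) (hcomm : Commute T F) {i j : m}
    (hij : i < j) (hdiag : T i i ≠ T j j) :
    F i j = (T i j * (F j j - F i i) +
      ∑ k ∈ Ioo i j, (T i k * F k j - F i k * T k j)) / (T j j - T i i) := by
  have hentry := congrFun (congrFun hcomm.eq i) j
  rw [mul_apply_of_lt hT hF hij, mul_apply_of_lt hF hT hij] at hentry
  rw [eq_div_iff (sub_ne_zero.2 hdiag.symm), sum_sub_distrib]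
  linear_combination -hentry

end Matrix.IsUpperTriangular

theorem parlett_recurrence_exp (N : ℕ) (T : Matrix (Fin N) (Fin N) ℂ)
    (hupper : ∀ i j : Fin N, j < i → T i j = 0)
    (hdiag : ∀ i j : Fin N, i ≠ j → T i i ≠ T j j)
    (F : Matrix (Fin N) (Fin N) ℂ) (hF : F = NormedSpace.exp T) :
    (∀ i j : Fin N, j < i → F i j = 0) ∧
    (∀ i : Fin N, F i i = Complex.exp (T i i)) ∧
    (∀ i j : Fin N, i < j →
      F i j = (T i j * (F j j - F i i) +
        ∑ k ∈ Finset.Ioo i j, (T i k * F k j - F i k * T k j)) / (T j j - T i i)) := by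
  subst hF
  have hT : T.IsUpperTriangular := fun i j => hupper i j
  have hexpT : (NormedSpace.exp T).IsUpperTriangular := hT.exp
  refine ⟨fun i j hji => hexpT hji, fun i => ?_, fun i j hij => ?_⟩
  · rw [hT.exp_apply_self, Complex.exp_eq_exp_ℂ]
  · exact hT.parlett_recurrence hexpT (Commute.refl T).exp_right hij (hdiag i j hij.ne)
end

section
/- Let t₁₁, t₂₂, t₁₂ be complex numbers with t₁₁ ≠ t₂₂, and let T = !![t₁₁, t₁₂; 0, t₂₂]. Set r = √(|t₁₁ − t₂₂|² + |t₁₂|²), c = |t₁₂|/r, s = |t₁₁ − t₂₂|/r, and α = arg(t₁₂) − arg(t₁₁ − t₂₂), and let U = !![e^{−iα}·c, −s; s, e^{iα}·c]. Then the matrix T′ = U * T * Uᴴ is upper triangular with the diagonal entries of T swapped: T′ 1 0 = 0, T′ 0 0 = t₂₂, and T′ 1 1 = t₁₁. -/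
/-!
Conjugating `!![a, b; 0, d]` by the unitary `!![conj w, -s; s, w]` (with `|w|² + s² = 1`, `s` real)
produces `s * (w * (a - d) - s * b)` in position `(1, 0)`, and once that vanishes the two
diagonal entries come out swapped. With `a - d = |a - d| e^{iθ}` and `b = |b| e^{iφ}`, the choice
`w = e^{i(φ - θ)} |b| / r`, `s = |a - d| / r` with
`r = √(|a - d|² + |b|²)` gives `w * (a - d) = |a - d| |b| e^{iφ} / r = s * b`.
-/

open Matrix Complex

open scoped ComplexConjugate

theorem unitary_conj_upperTriangular_swap (a b d w : ℂ) (s : ℝ)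
    (hunit : conj w * w + (s : ℂ) ^ 2 = 1) (hrot : w * (a - d) = s * b) :
    !![conj w, -(s : ℂ); (s : ℂ), w] * !![a, b; 0, d] * !![conj w, -(s : ℂ); (s : ℂ), w]ᴴ =
      !![d, conj w * (s * (a - d) + conj w * b); 0, a] := by
  have hadj : !![conj w, -(s : ℂ); (s : ℂ), w]ᴴ = !![w, (s : ℂ); -(s : ℂ), conj w] := by
    ext i j
    fin_cases i <;> fin_cases j <;> simp
  rw [hadj, mul_fin_two, mul_fin_two]
  simp only [EmbeddingLike.apply_eq_iff_eq, vecCons_inj, and_true]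
  refine ⟨⟨?_, ?_⟩, ?_, ?_⟩
  · linear_combination d * hunit + conj w * hrot
  · ring
  · linear_combination s * hrot
  · linear_combination a * hunit - conj w * hrot

theorem exp_arg_sub_mul_I_mul_norm_mul (z w : ℂ) :
    exp ((arg z - arg w : ℝ) * I) * ‖z‖ * w = ‖w‖ * z := by
  have h : exp ((arg z - arg w : ℝ) * I) * exp (arg w * I) = exp (arg z * I) := by
    rw [← exp_add]; push_cast; ring_nf
  linear_combination (-(exp ((arg z - arg w : ℝ) * I) * ‖z‖)) * norm_mul_exp_arg_mul_I w +
    (‖z‖ : ℂ) * ‖w‖ * h + (‖w‖ : ℂ) * norm_mul_exp_arg_mul_I z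

theorem div_hypot_sq_add_div_hypot_sq {a b : ℝ} (ha : a ≠ 0) :
    (b / √(a ^ 2 + b ^ 2)) ^ 2 + (a / √(a ^ 2 + b ^ 2)) ^ 2 = 1 := by
  have hpos : 0 < a ^ 2 + b ^ 2 := by positivity
  rw [div_pow, div_pow, Real.sq_sqrt hpos.le, ← add_div, add_comm, div_self hpos.ne']

theorem reordering_swaps_diagonal (t₁₁ t₂₂ t₁₂ : ℂ) (hne : t₁₁ ≠ t₂₂)
    (T : Matrix (Fin 2) (Fin 2) ℂ) (hT : T = !![t₁₁, t₁₂; 0, t₂₂])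
    (r : ℝ) (hr : r = Real.sqrt (‖t₁₁ - t₂₂‖ ^ 2 + ‖t₁₂‖ ^ 2))
    (c : ℝ) (hc : c = ‖t₁₂‖ / r)
    (s : ℝ) (hs : s = ‖t₁₁ - t₂₂‖ / r)
    (α : ℝ) (hα : α = Complex.arg t₁₂ - Complex.arg (t₁₁ - t₂₂))
    (U : Matrix (Fin 2) (Fin 2) ℂ)
    (hU : U = !![Complex.exp (-(α * Complex.I)) * (c : ℂ), -(s : ℂ);
                 (s : ℂ), Complex.exp (α * Complex.I) * (c : ℂ)])
    (T' : Matrix (Fin 2) (Fin 2) ℂ) (hT' : T' = U * T * Uᴴ) :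
    T' 1 0 = 0 ∧ T' 0 0 = t₂₂ ∧ T' 1 1 = t₁₁ := by
  obtain ⟨w, hw⟩ : ∃ w : ℂ, w = exp (α * I) * c := ⟨_, rfl⟩
  have hstar : conj w = exp (-(α * I)) * c := by
    simp [hw, ← exp_conj]
  have hcs : c ^ 2 + s ^ 2 = 1 := by
    rw [hc, hs, hr]
    exact div_hypot_sq_add_div_hypot_sq (norm_ne_zero_iff.mpr (sub_ne_zero.mpr hne))
  have hunit : conj w * w + (s : ℂ) ^ 2 = 1 := by
    rw [hstar, hw, mul_mul_mul_comm, ← exp_add, neg_add_cancel, exp_zero, one_mul, ← sq]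
    exact_mod_cast hcs
  have hrot : w * (t₁₁ - t₂₂) = s * t₁₂ := by
    rw [hw, hs, hc, hα, ofReal_div, ofReal_div]
    linear_combination exp_arg_sub_mul_I_mul_norm_mul t₁₂ (t₁₁ - t₂₂) / (r : ℂ)
  rw [hT', hU, hT, ← hw, ← hstar, unitary_conj_upperTriangular_swap _ _ _ _ _ hunit hrot]
  simp
end

section
/- Let λ₀ ∈ ℂ and ρ > 0, and let f : ℂ → ℂ be analytic on the open disc of center λ₀ and radius ρ. Then for all λ, μ in the open disc of center λ₀ and radius ρ/2 with λ ≠ μ, the divided difference admits the absolutely convergent double expansion (f(λ) − f(μ))/(λ − μ) = ∑_{n=0}^{∞} ( f^{(n+1)}(λ₀)/(n+1)! ) · ∑_{i=0}^{n} (λ − λ₀)^{n−i} (μ − λ₀)^{i}. -/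
open Finset

/-!
Subtracting the Taylor expansions of `f` at `λ` and `μ` and dividing
`(λ - λ₀)ⁿ⁺¹ - (μ - λ₀)ⁿ⁺¹` by `λ - μ` gives the expansion. For absolute convergence, the inner
sum is at most `(n + 1) tⁿ` with `t = max |λ - λ₀| |μ - λ₀|`, and
`(n + 1) f⁽ⁿ⁺¹⁾(λ₀) / (n + 1)! = (f')⁽ⁿ⁾(λ₀) / n!`, so the series is dominated by the Taylor series
of `f'` at radius `t`, which converges absolutely.
-/

theorem sub_pow_succ_eq_mul_sum_range {R : Type*} [CommRing R] (x y : R) (n : ℕ) :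
    x ^ (n + 1) - y ^ (n + 1) = (x - y) * ∑ i ∈ range (n + 1), x ^ (n - i) * y ^ i := by
  rw [← geom_sum₂_mul, geom_sum₂_comm, mul_comm]
  simp only [Nat.add_sub_cancel, mul_comm]

theorem norm_sum_range_pow_mul_pow_le {R : Type*} [SeminormedRing R] [NormOneClass R]
    (x y : R) (n : ℕ) :
    ‖∑ i ∈ range (n + 1), x ^ (n - i) * y ^ i‖ ≤ (n + 1) * max ‖x‖ ‖y‖ ^ n := by
  calc ‖∑ i ∈ range (n + 1), x ^ (n - i) * y ^ i‖
      ≤ ∑ i ∈ range (n + 1), ‖x‖ ^ (n - i) * ‖y‖ ^ i :=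
        (norm_sum_le _ _).trans <| sum_le_sum fun i _ =>
          (norm_mul_le _ _).trans <| mul_le_mul (norm_pow_le _ _) (norm_pow_le _ _)
            (norm_nonneg _) (by positivity)
    _ ≤ ∑ i ∈ range (n + 1), max ‖x‖ ‖y‖ ^ n := sum_le_sum fun i hi => by
        rw [← Nat.sub_add_cancel (mem_range_succ_iff.1 hi), pow_add, Nat.add_sub_cancel]
        gcongr
        exacts [le_max_left _ _, le_max_right _ _]
    _ = (n + 1) * max ‖x‖ ‖y‖ ^ n := by simp

theorem HasSum.dividedDifference {K : Type*} [Field K] [TopologicalSpace K]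
    [IsTopologicalRing K] {a : ℕ → K} {x y u v : K}
    (hu : HasSum (fun n => a n * x ^ n) u) (hv : HasSum (fun n => a n * y ^ n) v) (hxy : x ≠ y) :
    HasSum (fun n => a (n + 1) * ∑ i ∈ range (n + 1), x ^ (n - i) * y ^ i) ((u - v) / (x - y)) := by
  have hsub : HasSum (fun n => a n * (x ^ n - y ^ n)) (u - v) := by
    simpa only [mul_sub] using hu.sub hv
  have hshift : HasSum (fun n => a (n + 1) * (x ^ (n + 1) - y ^ (n + 1))) (u - v) := by
    simpa using (hasSum_nat_add_iff' 1).2 hsub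
  have hxy' : x - y ≠ 0 := sub_ne_zero.2 hxy
  rw [← hasSum_mul_left_iff hxy', mul_div_cancel₀ _ hxy']
  refine hshift.congr_fun fun n => ?_
  rw [sub_pow_succ_eq_mul_sum_range]
  ring

theorem HasFPowerSeriesOnBall.iteratedDeriv_eq_factorial_smul_coeff {𝕜 E : Type*}
    [NontriviallyNormedField 𝕜] [NormedAddCommGroup E] [NormedSpace 𝕜 E] [CompleteSpace E]
    {f : 𝕜 → E} {p : FormalMultilinearSeries 𝕜 𝕜 E} {x : 𝕜} {r : ENNReal}
    (h : HasFPowerSeriesOnBall f p x r) (n : ℕ) :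
    iteratedDeriv n f x = n.factorial • p.coeff n := by
  rw [iteratedDeriv_eq_iteratedFDeriv, ← h.factorial_smul 1]
  rfl

theorem HasFPowerSeriesOnBall.summable_norm_iteratedDeriv_div_factorial_mul_pow {𝕜 E : Type*}
    [RCLike 𝕜] [NormedAddCommGroup E] [NormedSpace 𝕜 E] [CompleteSpace E]
    {f : 𝕜 → E} {p : FormalMultilinearSeries 𝕜 𝕜 E} {x : 𝕜} {r : ENNReal}
    (h : HasFPowerSeriesOnBall f p x r) {t : NNReal} (ht : (t : ENNReal) < r) :
    Summable fun n => ‖iteratedDeriv n f x‖ / n.factorial * (t : ℝ) ^ n := by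
  refine (p.summable_norm_mul_pow (ht.trans_le h.r_le)).congr fun n => ?_
  rw [h.iteratedDeriv_eq_factorial_smul_coeff, RCLike.norm_nsmul 𝕜, nsmul_eq_mul, p.norm_apply_eq_norm_coef,
    mul_div_cancel_left₀ _ (by positivity)]

theorem Complex.summable_norm_iteratedDeriv_div_factorial_mul_pow {E : Type*}
    [NormedAddCommGroup E] [NormedSpace ℂ E] [CompleteSpace E] {f : ℂ → E} {c : ℂ} {r t : ℝ}
    (hf : DifferentiableOn ℂ f (Metric.ball c r)) (ht₀ : 0 ≤ t) (ht : t < r) :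
    Summable fun n => ‖iteratedDeriv n f c‖ / n.factorial * t ^ n := by
  obtain ⟨s, hts, hsr⟩ := exists_between ht
  lift s to NNReal using ht₀.trans hts.le
  lift t to NNReal using ht₀
  have hs : 0 < s := lt_of_le_of_lt t.2 hts
  exact ((hf.mono (Metric.closedBall_subset_ball hsr)).hasFPowerSeriesOnBall hs)
    |>.summable_norm_iteratedDeriv_div_factorial_mul_pow (by exact_mod_cast hts)

theorem norm_iteratedDeriv_succ_div_factorial_mul_sum_le {𝕜 : Type*} [RCLike 𝕜]
    (f : 𝕜 → 𝕜) (c x y : 𝕜) (n : ℕ) :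
    ‖iteratedDeriv (n + 1) f c / ((n + 1).factorial : 𝕜) *
        ∑ i ∈ range (n + 1), x ^ (n - i) * y ^ i‖ ≤
      ‖iteratedDeriv n (deriv f) c‖ / n.factorial * max ‖x‖ ‖y‖ ^ n :=
  calc _ ≤ ‖iteratedDeriv (n + 1) f c‖ / (n + 1).factorial * ((n + 1) * max ‖x‖ ‖y‖ ^ n) := by
        rw [norm_mul, norm_div, RCLike.norm_natCast]
        gcongr
        exact norm_sum_range_pow_mul_pow_le x y n
    _ = _ := by
        rw [iteratedDeriv_succ', Nat.factorial_succ]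
        push_cast
        field_simp

theorem dividedDifference_taylor_expansion
    (z₀ : ℂ) (ρ : ℝ) (hρ : 0 < ρ) (f : ℂ → ℂ)
    (hf : AnalyticOnNhd ℂ f (Metric.ball z₀ ρ))
    (l m : ℂ) (hl : l ∈ Metric.ball z₀ (ρ / 2)) (hm : m ∈ Metric.ball z₀ (ρ / 2))
    (hne : l ≠ m) :
    Summable (fun n : ℕ =>
      ‖(iteratedDeriv (n + 1) f z₀ / ((Nat.factorial (n + 1)) : ℂ)) *
        ∑ i ∈ Finset.range (n + 1), (l - z₀) ^ (n - i) * (m - z₀) ^ i‖) ∧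
    (f l - f m) / (l - m) =
      ∑' n : ℕ, (iteratedDeriv (n + 1) f z₀ / ((Nat.factorial (n + 1)) : ℂ)) *
        ∑ i ∈ Finset.range (n + 1), (l - z₀) ^ (n - i) * (m - z₀) ^ i := by
  have hball : Metric.ball z₀ (ρ / 2) ⊆ Metric.ball z₀ ρ :=
    Metric.ball_subset_ball (half_le_self hρ.le)
  set t := max ‖l - z₀‖ ‖m - z₀‖
  have ht : t < ρ / 2 := max_lt (mem_ball_iff_norm.1 hl) (mem_ball_iff_norm.1 hm)
  have hsummable := Complex.summable_norm_iteratedDeriv_div_factorial_mul_pow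
    (hf.deriv.mono hball).differentiableOn (by positivity) ht
  refine ⟨hsummable.of_nonneg_of_le (fun _ => norm_nonneg _)
    fun n => norm_iteratedDeriv_succ_div_factorial_mul_sum_le f z₀ _ _ n, ?_⟩
  have htaylor : ∀ z ∈ Metric.ball z₀ (ρ / 2),
      HasSum (fun n => iteratedDeriv n f z₀ / n.factorial * (z - z₀) ^ n) (f z) := fun z hz => by
    refine (Complex.hasSum_taylorSeries_on_ball (hf.mono hball).differentiableOn hz).congr_fun
      fun n => ?_
    rw [smul_eq_mul, smul_eq_mul]
    ring
  have hdd := (htaylor l hl).dividedDifference (htaylor m hm) (sub_left_injective.ne hne)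
  rw [sub_sub_sub_cancel_right] at hdd
  exact hdd.tsum_eq.symm
end
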